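/- arXiv:1009.0566 — 10 statements merged into one kernel-verified Lean document; each statement's English description precedes it below -/
import Mathlib

section
/- The Rado bit graph has the extension property: for any two disjoint finite sets J, D of natural numbers there exists a natural number v, lying in neither J nor D, such that v is adjacent to every element of J and to no element of D, where two distinct natural numbers m, n are adjacent exactly when Nat.testBit m n = true or Nat.testBit n m = true. -/
/-- The Rado bit graph: distinct naturals `m`, `n` are adjacent iff the `n`-th binary
digit of `m` is 1 or the `m`-th binary digit of `n` is 1. -/
def radoGraph : SimpleGraph ℕ where
  Adj m n := m ≠ n ∧ (Nat.testBit m n = true ∨ Nat.testBit n m = true)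
  symm := ⟨fun m n ⟨h, h'⟩ => ⟨h.symm, h'.symm⟩⟩
  loopless := ⟨fun m ⟨h, _⟩ => h rfl⟩

/-!
The witness for a prescribed neighbourhood `s` inside a finite set `S` is the number whose
binary digits are `s` together with one extra digit `N` beyond `S`. The extra digit makes the
witness larger than every element of `S`, so no element `x` of `S` can have the witness among
its binary digits, and adjacency to `x` is decided by the `x`-th digit of the witness alone.
-/

theorem Nat.testBit_sum_two_pow (s : Finset ℕ) (j : ℕ) :
    (∑ i ∈ s, 2 ^ i).testBit j = true ↔ j ∈ s := by
  rw [← Nat.mem_bitIndices, ← List.mem_toFinset, Finset.toFinset_bitIndices_sum_two_pow]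

theorem Nat.lt_of_testBit_eq_true {n i : ℕ} (h : n.testBit i = true) : i < n :=
  i.lt_two_pow_self.trans_le (Nat.ge_two_pow_of_testBit h)

theorem radoGraph_adj_iff_testBit_of_lt {v x : ℕ} (h : x < v) :
    radoGraph.Adj v x ↔ v.testBit x = true := by
  have hxv : x.testBit v = false := Nat.testBit_lt_two_pow (h.trans v.lt_two_pow_self)
  simp [radoGraph, h.ne', hxv]

theorem radoGraph_exists_adj_iff_mem (S s : Finset ℕ) :
    ∃ v, (∀ x ∈ S, x < v) ∧ ∀ x ∈ S, (radoGraph.Adj v x ↔ x ∈ s) := by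
  set N := S.sup id + 1
  have hN : ∀ x ∈ S, x < N := fun x hx => Nat.lt_succ_of_le (Finset.le_sup (f := id) hx)
  set v := ∑ i ∈ insert N s, 2 ^ i
  have hbits : ∀ j, v.testBit j = true ↔ j ∈ insert N s := Nat.testBit_sum_two_pow _
  have hNv : N < v := Nat.lt_of_testBit_eq_true ((hbits N).2 (Finset.mem_insert_self N s))
  have hSv : ∀ x ∈ S, x < v := fun x hx => (hN x hx).trans hNv
  refine ⟨v, hSv, fun x hx => ?_⟩
  rw [radoGraph_adj_iff_testBit_of_lt (hSv x hx), hbits, Finset.mem_insert,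
    or_iff_right (hN x hx).ne]

/-- The Rado bit graph has the extension property. -/
theorem radoGraph_extension_property (J D : Finset ℕ) (hJD : Disjoint J D) :
    ∃ v : ℕ, v ∉ J ∧ v ∉ D ∧ (∀ j ∈ J, radoGraph.Adj v j) ∧ ∀ d ∈ D, ¬ radoGraph.Adj v d := by
  obtain ⟨v, hlt, hadj⟩ := radoGraph_exists_adj_iff_mem (J ∪ D) J
  refine ⟨v, fun hv => (hlt v (Finset.mem_union_left D hv)).false,
    fun hv => (hlt v (Finset.mem_union_right J hv)).false,
    fun j hj => (hadj j (Finset.mem_union_left D hj)).2 hj,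
    fun d hd => (hadj d (Finset.mem_union_right J hd)).not.2 (Finset.disjoint_right.1 hJD hd)⟩
end

section
/- Let E be the type of non-diagonal unordered pairs of natural numbers, and let μ be the product over E of Bernoulli(1/2) probability measures on Bool, a probability measure on the function space E → Bool. For f : E → Bool let G_f be the simple graph on ℕ in which distinct m and n are adjacent iff f assigns true to the unordered pair {m, n}. Then there exists a simple graph H on ℕ such that the set of f for which G_f is isomorphic to H has μ-measure 1. -/
/-!
By a back-and-forth argument, any two countable graphs with the extension property are
isomorphic. For disjoint finite `A`, `B` and `n` beyond `A ∪ B`, the events that vertex `n + i`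
is joined to every vertex of `A` and to none of `B` depend on disjoint sets of edges, so they are
independent, each of probability `2 ^ (-|A ∪ B|)`; by the second Borel–Cantelli lemma one of them
almost surely occurs. As there are countably many pairs `(A, B)`, the random graph almost surely
has the extension property, hence is almost surely isomorphic to any fixed sample that has it.
-/

open MeasureTheory ProbabilityTheory

/-- The index type of potential edges: non-diagonal unordered pairs of naturals. -/
abbrev EdgeIdx : Type := {q : Sym2 ℕ // ¬ q.IsDiag}

/-- The graph on `ℕ` determined by an edge-indicator function `f`. -/
def graphOf (f : EdgeIdx → Bool) : SimpleGraph ℕ where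
  Adj m n := m ≠ n ∧ ∃ e : EdgeIdx, (e : Sym2 ℕ) = s(m, n) ∧ f e = true
  symm := ⟨by
    rintro m n ⟨hmn, e, he, hf⟩
    exact ⟨hmn.symm, e, he.trans (Sym2.eq_swap), hf⟩⟩
  loopless := ⟨fun m ⟨h, _⟩ => h rfl⟩

namespace SimpleGraph

variable {α β : Type*} {G : SimpleGraph α} {H : SimpleGraph β}

def HasExtensionProperty (G : SimpleGraph α) : Prop :=
  ∀ A B : Finset α, Disjoint A B → ∃ v ∉ B, (∀ a ∈ A, G.Adj v a) ∧ ∀ b ∈ B, ¬ G.Adj v b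

variable (G H) in
def Compatible (p q : α × β) : Prop :=
  (p.1 = q.1 ↔ p.2 = q.2) ∧ (G.Adj p.1 q.1 ↔ H.Adj p.2 q.2)

lemma compatible_self (p : α × β) : Compatible G H p p :=
  ⟨iff_of_true rfl rfl, iff_of_false (G.irrefl) (H.irrefl)⟩

lemma Compatible.symm {p q : α × β} (h : Compatible G H p q) : Compatible G H q p :=
  ⟨by rw [eq_comm, h.1, eq_comm], by rw [G.adj_comm, h.2, H.adj_comm]⟩

lemma Compatible.swap {p q : α × β} (h : Compatible G H p q) : Compatible H G p.swap q.swap :=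
  ⟨h.1.symm, h.2.symm⟩

variable (G H) in
/-- The graph of a finite partial isomorphism; the first conjunct of `Compatible` makes it the
graph of a partial injection. -/
abbrev PartialIso : Type _ :=
  {f : Finset (α × β) // ∀ p ∈ f, ∀ q ∈ f, Compatible G H p q}

namespace PartialIso

instance : Inhabited (PartialIso G H) := ⟨⟨∅, by simp⟩⟩

def symm (f : PartialIso G H) : PartialIso H G :=
  ⟨f.1.map (Equiv.prodComm α β).toEmbedding, fun p hp q hq => by
    rw [Finset.mem_map_equiv] at hp hq
    exact (f.2 _ hp _ hq).swap⟩

lemma mem_symm {f : PartialIso G H} {a : α} {b : β} : (b, a) ∈ f.symm.1 ↔ (a, b) ∈ f.1 :=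
  Finset.mem_map_equiv

lemma exists_le_mem_of_compatible (f : PartialIso G H) {p : α × β}
    (hp : ∀ q ∈ f.1, Compatible G H q p) : ∃ g : PartialIso G H, f ≤ g ∧ p ∈ g.1 := by
  classical
  refine ⟨⟨insert p f.1, ?_⟩, Finset.subset_insert _ _, Finset.mem_insert_self _ _⟩
  simp only [Finset.forall_mem_insert]
  exact ⟨⟨compatible_self p, fun q hq => (hp q hq).symm⟩, fun q hq => ⟨hp q hq, f.2 q hq⟩⟩

/-- A new vertex `a` is sent to a vertex of `H` which, by the extension property, has the same
adjacencies to the range of `f` as `a` has to its domain. -/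
theorem exists_compatible (hH : H.HasExtensionProperty) (f : PartialIso G H) (a : α) :
    ∃ b, ∀ q ∈ f.1, Compatible G H q (a, b) := by
  classical
  by_cases h : ∃ b, (a, b) ∈ f.1
  · obtain ⟨b, hb⟩ := h
    exact ⟨b, fun q hq => f.2 q hq _ hb⟩
  push Not at h
  set A := (f.1.filter (G.Adj ·.1 a)).image Prod.snd
  set B := (f.1.filter (¬ G.Adj ·.1 a)).image Prod.snd
  have hAB : Disjoint A B := by
    simp only [A, B, Finset.disjoint_left, Finset.mem_image, Finset.mem_filter]
    rintro _ ⟨p, ⟨hp, hpa⟩, rfl⟩ ⟨q, ⟨hq, hqa⟩, hqp⟩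
    exact hqa ((f.2 q hq p hp).1.2 hqp ▸ hpa)
  obtain ⟨v, hvB, hvA, hvB'⟩ := hH A B hAB
  refine ⟨v, fun q hq => ?_⟩
  have hqa : q.1 ≠ a := fun e => h q.2 (e ▸ hq)
  by_cases hadj : G.Adj q.1 a
  · have hv : H.Adj v q.2 := hvA _ (Finset.mem_image_of_mem _ (Finset.mem_filter.2 ⟨hq, hadj⟩))
    exact ⟨iff_of_false hqa hv.ne', iff_of_true hadj hv.symm⟩
  · have hqB : q.2 ∈ B := Finset.mem_image_of_mem _ (Finset.mem_filter.2 ⟨hq, hadj⟩)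
    exact ⟨iff_of_false hqa (fun e : q.2 = v => hvB (e ▸ hqB)),
      iff_of_false hadj (fun e => hvB' _ hqB e.symm)⟩

def definedAtLeft (hH : H.HasExtensionProperty) (a : α) : Order.Cofinal (PartialIso G H) where
  carrier := {f | ∃ b, (a, b) ∈ f.1}
  isCofinal f := by
    obtain ⟨b, hb⟩ := f.exists_compatible hH a
    obtain ⟨g, hfg, hg⟩ := f.exists_le_mem_of_compatible hb
    exact ⟨g, ⟨b, hg⟩, hfg⟩

def definedAtRight (hG : G.HasExtensionProperty) (b : β) : Order.Cofinal (PartialIso G H) where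
  carrier := {f | ∃ a, (a, b) ∈ f.1}
  isCofinal f := by
    obtain ⟨a, ha⟩ := f.symm.exists_compatible hG b
    have hb : ∀ q ∈ f.1, Compatible G H q (a, b) := fun q hq => (ha q.swap (mem_symm.2 hq)).swap
    obtain ⟨g, hfg, hg⟩ := f.exists_le_mem_of_compatible hb
    exact ⟨g, ⟨a, hg⟩, hfg⟩

end PartialIso

theorem nonempty_iso_of_compatible {R : α → β → Prop} (hl : ∀ a, ∃ b, R a b)
    (hr : ∀ b, ∃ a, R a b) (hR : ∀ a b a' b', R a b → R a' b' → Compatible G H (a, b) (a', b')) :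
    Nonempty (G ≃g H) := by
  choose F hF using hl
  have hinj : F.Injective := fun a a' e => (hR _ _ _ _ (hF a) (hF a')).1.2 e
  have hsurj : F.Surjective := fun b => by
    obtain ⟨a, ha⟩ := hr b
    exact ⟨a, (hR _ _ _ _ (hF a) ha).1.1 rfl⟩
  exact ⟨⟨Equiv.ofBijective F ⟨hinj, hsurj⟩, fun {a a'} => (hR _ _ _ _ (hF a) (hF a')).2.symm⟩⟩

theorem HasExtensionProperty.nonempty_iso [Countable α] [Countable β]
    (hG : G.HasExtensionProperty) (hH : H.HasExtensionProperty) : Nonempty (G ≃g H) := by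
  cases nonempty_encodable α
  cases nonempty_encodable β
  let D : α ⊕ β → Order.Cofinal (PartialIso G H) :=
    Sum.elim (PartialIso.definedAtLeft hH) (PartialIso.definedAtRight hG)
  let I := Order.idealOfCofinals default D
  refine nonempty_iso_of_compatible (R := fun a b => ∃ f ∈ I, (a, b) ∈ f.1) (fun a => ?_)
    (fun b => ?_) ?_
  · obtain ⟨f, ⟨b, hb⟩, hf⟩ := Order.cofinal_meets_idealOfCofinals default D (.inl a : α ⊕ β)
    exact ⟨b, f, hf, hb⟩
  · obtain ⟨f, ⟨a, ha⟩, hf⟩ := Order.cofinal_meets_idealOfCofinals default D (.inr b : α ⊕ β)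
    exact ⟨a, f, hf, ha⟩
  · rintro a b a' b' ⟨f, hf, hab⟩ ⟨f', hf', hab'⟩
    obtain ⟨g, -, hfg, hf'g⟩ := I.directed _ hf _ hf'
    exact g.2 _ (hfg hab) _ (hf'g hab')

end SimpleGraph

namespace ProbabilityTheory

open Function

variable {ι κ Ω : Type*} {mΩ : MeasurableSpace Ω} {μ : Measure Ω} {m : ι → MeasurableSpace Ω}

theorem iIndep.iIndepSet_of_disjoint (h_le : ∀ i, m i ≤ mΩ) (h : iIndep m μ)
    {S : κ → Set ι} (hS : Pairwise (Disjoint on S)) {s : κ → Set Ω}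
    (hs : ∀ k, MeasurableSet[⨆ i ∈ S k, m i] (s k)) : iIndepSet s μ := by
  have := h.isProbabilityMeasure
  have hsm : ∀ k, MeasurableSet (s k) := fun k => iSup₂_le (fun i _ => h_le i) _ (hs k)
  rw [iIndepSet_iff_meas_biInter hsm]
  intro T
  classical
  induction T using Finset.induction_on with
  | empty => simp
  | insert a T ha ih =>
    have hdisj : Disjoint (S a) (⋃ k ∈ T, S k) :=
      Set.disjoint_iUnion₂_right.2 fun k hk => hS (ne_of_mem_of_not_mem hk ha).symm
    have hT : MeasurableSet[⨆ i ∈ ⋃ k ∈ T, S k, m i] (⋂ k ∈ T, s k) :=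
      Finset.measurableSet_biInter _ fun k hk =>
        biSup_mono (f := m) (fun i hi => Set.mem_biUnion hk hi) _ (hs k)
    rw [Finset.set_biInter_insert, Finset.prod_insert ha, ← ih]
    exact (Indep_iff _ _ μ).1 (indep_iSup_of_disjoint h_le h hdisj) _ _ (hs a) hT

end ProbabilityTheory

/-- A junk value when `m = n`. -/
def edgeOf (m n : ℕ) : EdgeIdx :=
  if h : m = n then ⟨s(0, 1), by simp⟩ else ⟨s(m, n), by simpa⟩

lemma coe_edgeOf {m n : ℕ} (h : m ≠ n) : (edgeOf m n : Sym2 ℕ) = s(m, n) := by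
  rw [edgeOf, dif_neg h]

lemma graphOf_adj_iff {f : EdgeIdx → Bool} {m n : ℕ} (h : m ≠ n) :
    (graphOf f).Adj m n ↔ f (edgeOf m n) = true := by
  refine ⟨fun ⟨_, e, he, hf⟩ => ?_, fun hf => ⟨h, _, coe_edgeOf h, hf⟩⟩
  rwa [← Subtype.ext (he.trans (coe_edgeOf h).symm)]

lemma edgeOf_eq_edgeOf_iff {v a w b : ℕ} (h₁ : v ≠ a) (h₂ : w ≠ b) :
    edgeOf v a = edgeOf w b ↔ (v = w ∧ a = b) ∨ (v = b ∧ a = w) := by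
  rw [Subtype.ext_iff, coe_edgeOf h₁, coe_edgeOf h₂, Sym2.eq_iff]

def extensionEvent (A B : Finset ℕ) (v : ℕ) : Set (EdgeIdx → Bool) :=
  ⋂ a ∈ A ∪ B, {f | f (edgeOf v a) = decide (a ∈ A)}

lemma graphOf_adj_iff_of_mem_extensionEvent {f : EdgeIdx → Bool} {A B : Finset ℕ} {v a : ℕ}
    (hf : f ∈ extensionEvent A B v) (hv : v ∉ A ∪ B) (ha : a ∈ A ∪ B) :
    (graphOf f).Adj v a ↔ a ∈ A := by
  rw [graphOf_adj_iff (ne_of_mem_of_not_mem ha hv).symm, Set.mem_iInter₂.1 hf a ha,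
    decide_eq_true_iff]

section RandomGraph

open Function Filter

variable {μ : Measure (EdgeIdx → Bool)}

lemma measure_preimage_eval_singleton (hmarg : ∀ e : EdgeIdx, μ.map (fun f => f e) =
      (PMF.bernoulli (1 / 2) (by norm_num)).toMeasure) (e : EdgeIdx) (b : Bool) :
    μ ((fun f => f e) ⁻¹' {b}) = 2⁻¹ := by
  have h := Measure.map_apply (μ := μ) (measurable_pi_apply e) (measurableSet_singleton b)
  rw [hmarg e, PMF.toMeasure_apply_singleton _ _ (measurableSet_singleton b),
    PMF.bernoulli_apply] at h
  rw [← h]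
  cases b <;> norm_num

lemma measure_extensionEvent (hindep : iIndepFun (fun e (f : EdgeIdx → Bool) => f e) μ)
    (hcoord : ∀ e b, μ ((fun f : EdgeIdx → Bool => f e) ⁻¹' {b}) = 2⁻¹)
    {A B : Finset ℕ} {v : ℕ} (hv : v ∉ A ∪ B) :
    μ (extensionEvent A B v) = 2⁻¹ ^ (A ∪ B).card := by
  have hinj : Injective fun a : ↥(A ∪ B) => edgeOf v a := by
    intro a b hab
    rcases (edgeOf_eq_edgeOf_iff (ne_of_mem_of_not_mem a.2 hv).symm
      (ne_of_mem_of_not_mem b.2 hv).symm).1 hab with ⟨-, h⟩ | ⟨h, -⟩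
    · exact Subtype.ext h
    · exact absurd (h ▸ b.2) hv
  have hprod := (hindep.precomp hinj).measure_inter_preimage_eq_mul Finset.univ
    (sets := fun a => {decide (a.1 ∈ A)}) fun _ _ => measurableSet_singleton _
  simp only [Finset.mem_univ, Set.iInter_true] at hprod
  have hE : extensionEvent A B v =
      ⋂ a : ↥(A ∪ B), (fun f => f (edgeOf v a)) ⁻¹' {decide (a.1 ∈ A)} := by
    ext f
    simp [extensionEvent]
  simp [hE, hprod, hcoord]

lemma iIndepSet_extensionEvent (hindep : iIndepFun (fun e (f : EdgeIdx → Bool) => f e) μ)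
    {A B : Finset ℕ} {v : ℕ → ℕ} (hv : Injective v) (hvAB : ∀ i, v i ∉ A ∪ B) :
    iIndepSet (fun i => extensionEvent A B (v i)) μ := by
  refine ((iIndepFun_iff_iIndep _ _ μ).1 hindep).iIndepSet_of_disjoint
    (fun e => (measurable_pi_apply e).comap_le) (S := fun i => edgeOf (v i) '' ↑(A ∪ B))
    (fun i j hij => ?_) fun i => ?_
  · refine Set.disjoint_left.2 ?_
    rintro _ ⟨a, ha, rfl⟩ ⟨b, hb, hab⟩
    rcases (edgeOf_eq_edgeOf_iff (ne_of_mem_of_not_mem hb (hvAB j)).symm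
      (ne_of_mem_of_not_mem ha (hvAB i)).symm).1 hab with ⟨h, -⟩ | ⟨h, -⟩
    · exact hij (hv h).symm
    · exact hvAB j (h ▸ ha)
  · refine Finset.measurableSet_biInter _ fun a ha => ?_
    exact le_iSup₂ (f := fun e (_ : e ∈ edgeOf (v i) '' ↑(A ∪ B)) =>
      MeasurableSpace.comap (fun f : EdgeIdx → Bool => f e) inferInstance) _
      (Set.mem_image_of_mem _ ha) _ (comap_measurable _ (measurableSet_singleton _))

lemma ae_exists_mem_extensionEvent [IsProbabilityMeasure μ]
    (hindep : iIndepFun (fun e (f : EdgeIdx → Bool) => f e) μ)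
    (hcoord : ∀ e b, μ ((fun f : EdgeIdx → Bool => f e) ⁻¹' {b}) = 2⁻¹) (A B : Finset ℕ) :
    ∀ᵐ f ∂μ, ∃ v ∉ A ∪ B, f ∈ extensionEvent A B v := by
  obtain ⟨n, hn⟩ := (A ∪ B).exists_nat_subset_range
  have hv : ∀ i, n + i ∉ A ∪ B := fun i h => by simpa using hn h
  have hmeas : ∀ i, MeasurableSet (extensionEvent A B (n + i)) := fun i =>
    Finset.measurableSet_biInter _ fun a _ => measurable_pi_apply _ (measurableSet_singleton _)
  have hsum : ∑' i, μ (extensionEvent A B (n + i)) = ⊤ := by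
    simp [measure_extensionEvent hindep hcoord (hv _)]
  have hlimsup := measure_limsup_eq_one hmeas
    (iIndepSet_extensionEvent hindep (add_right_injective n) hv) hsum
  have hae : ∀ᵐ f ∂μ, f ∈ limsup (fun i => extensionEvent A B (n + i)) atTop :=
    (ae_mem_iff_measure_eq (MeasurableSet.measurableSet_limsup hmeas).nullMeasurableSet).2
      (hlimsup.trans measure_univ.symm)
  filter_upwards [hae] with f hf
  obtain ⟨i, hi⟩ := (mem_limsup_iff_frequently_mem.1 hf).exists
  exact ⟨n + i, hv i, hi⟩

lemma ae_hasExtensionProperty [IsProbabilityMeasure μ]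
    (hindep : iIndepFun (fun e (f : EdgeIdx → Bool) => f e) μ)
    (hcoord : ∀ e b, μ ((fun f : EdgeIdx → Bool => f e) ⁻¹' {b}) = 2⁻¹) :
    ∀ᵐ f ∂μ, (graphOf f).HasExtensionProperty := by
  have h : ∀ᵐ f ∂μ, ∀ p : Finset ℕ × Finset ℕ, ∃ v ∉ p.1 ∪ p.2, f ∈ extensionEvent p.1 p.2 v :=
    ae_all_iff.2 fun p => ae_exists_mem_extensionEvent hindep hcoord p.1 p.2
  filter_upwards [h] with f hf A B hAB
  obtain ⟨v, hv, hfv⟩ := hf (A, B)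
  have hadj {a : ℕ} := graphOf_adj_iff_of_mem_extensionEvent (a := a) hfv hv
  refine ⟨v, fun hvB => hv (Finset.mem_union_right _ hvB),
    fun a ha => (hadj (Finset.mem_union_left _ ha)).2 ha, fun b hb => ?_⟩
  rw [hadj (Finset.mem_union_right _ hb)]
  exact Finset.disjoint_right.1 hAB hb

end RandomGraph

/-- Erdős–Rényi: a countable random graph with edges chosen independently with
probability `1/2` is almost surely isomorphic to one fixed graph `H`.  Here `μ` is the
product over `EdgeIdx` of Bernoulli(1/2) measures on `Bool`, characterized as a
probability measure whose coordinate projections are independent and each distributed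
according to the Bernoulli(1/2) measure. -/
theorem exists_almost_surely_isomorphic_graph
    (μ : Measure (EdgeIdx → Bool)) [IsProbabilityMeasure μ]
    (hindep : iIndepFun (fun e (f : EdgeIdx → Bool) => f e) μ)
    (hmarg : ∀ e : EdgeIdx, μ.map (fun f => f e) =
      (PMF.bernoulli (1 / 2) (by norm_num)).toMeasure) :
    ∃ H : SimpleGraph ℕ, μ {f | Nonempty (graphOf f ≃g H)} = 1 := by
  have hext := ae_hasExtensionProperty hindep (measure_preimage_eval_singleton hmarg)
  obtain ⟨f₀, hf₀⟩ := hext.exists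
  have hiso : ∀ᵐ f ∂μ, Nonempty (graphOf f ≃g graphOf f₀) :=
    hext.mono fun f hf => hf.nonempty_iso hf₀
  exact ⟨graphOf f₀, (measure_congr (ae_eq_univ.2 (ae_iff.1 hiso))).trans measure_univ⟩
end

section
/- There exists a metric space U on a countable nonempty type such that: (i) the distance between any two points of U is a rational number; (ii) U is ultrahomogeneous, i.e., every distance-preserving bijection between two finite subsets of U extends to a bijective self-isometry of U; and (iii) U is universal, i.e., every metric space on a countable type all of whose distances are rational admits an isometric embedding into U. -/
/-!
Start from a point and iterate the Katětov extension `X ↦ FinKatetov X`: rational Katětov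
functions on `X` determined by finitely many values, with the sup metric, into which `X` embeds
by `x ↦ dist x ·`. Every rational one-point extension of a finite configuration in one stage is
realised in the next, so the inductive limit of the tower is a countable metric space with
rational distances and the one-point extension property. That property drives a forth argument
(universality) and a back-and-forth argument over finite partial isometries (ultrahomogeneity).
-/

universe u

/-- A metric space has rational distances when every distance lies in the image of `ℚ`. -/
def RationalDistances (U : Type*) [MetricSpace U] : Prop :=
  ∀ x y : U, ∃ q : ℚ, dist x y = (q : ℝ)

/-- A metric space is ultrahomogeneous when every distance-preserving bijection between
two finite subsets extends to a bijective self-isometry. -/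
def UltrahomogeneousMS (U : Type*) [MetricSpace U] : Prop :=
  ∀ (S T : Finset U) (e : (S : Set U) ≃ (T : Set U)),
    (∀ x y : (S : Set U), dist ((e x : U)) ((e y : U)) = dist (x : U) (y : U)) →
    ∃ φ : U ≃ᵢ U, ∀ x : (S : Set U), φ (x : U) = ((e x) : U)

/-- A metric space `U` is universal for countable metric spaces with rational distances
when each such space admits an isometric embedding into `U`. -/
def UniversalForRationalMS (U : Type*) [MetricSpace U] : Prop :=
  ∀ (X : Type u) [MetricSpace X] [Countable X], RationalDistances X →
    ∃ f : X → U, ∀ x y : X, dist (f x) (f y) = dist x y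

open Finset

namespace RationalDistances

variable {X : Type*} [MetricSpace X]

noncomputable def ratDist (h : RationalDistances X) (x y : X) : ℚ := (h x y).choose

theorem coe_ratDist (h : RationalDistances X) (x y : X) : (h.ratDist x y : ℝ) = dist x y :=
  (h x y).choose_spec.symm

end RationalDistances

/-- Katětov functions are the distance profiles `x ↦ dist z x` of a possible new point `z`.
These are rational-valued and determined by finitely many values through
`f x = min_{s ∈ S} (f s + dist s x)`, which keeps the space of them countable. -/
structure FinKatetov (X : Type*) [MetricSpace X] where
  toFun : X → ℚ
  le_add_dist' : ∀ x y, (toFun x : ℝ) ≤ toFun y + dist x y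
  dist_le_add' : ∀ x y, dist x y ≤ toFun x + toFun y
  exists_support' :
    ∃ S : Finset X, S.Nonempty ∧ ∀ x, ∃ s ∈ S, (toFun x : ℝ) = toFun s + dist s x

namespace FinKatetov

variable {X : Type*} [MetricSpace X]

instance : FunLike (FinKatetov X) X ℚ where
  coe := toFun
  coe_injective := by rintro ⟨⟩ ⟨⟩ h; congr

@[ext]
theorem ext {f g : FinKatetov X} (h : ∀ x, f x = g x) : f = g := DFunLike.ext _ _ h

theorem le_add_dist (f : FinKatetov X) (x y : X) : (f x : ℝ) ≤ f y + dist x y :=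
  f.le_add_dist' x y

theorem dist_le_add (f : FinKatetov X) (x y : X) : dist x y ≤ f x + f y := f.dist_le_add' x y

theorem exists_support (f : FinKatetov X) :
    ∃ S : Finset X, S.Nonempty ∧ ∀ x, ∃ s ∈ S, (f x : ℝ) = f s + dist s x :=
  f.exists_support'

theorem sub_le_sub_of_eq_add_dist (f g : FinKatetov X) {x t : X}
    (h : (g x : ℝ) = g t + dist t x) : (f x : ℝ) - g x ≤ f t - g t := by
  linarith [f.le_add_dist x t, dist_comm x t]

theorem exists_forall_abs_sub_le (f g : FinKatetov X) :
    ∃ z, ∀ x, |(f x : ℝ) - g x| ≤ |(f z : ℝ) - g z| := by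
  classical
  obtain ⟨S, hS, hfS⟩ := f.exists_support
  obtain ⟨T, -, hgT⟩ := g.exists_support
  obtain ⟨z, -, hz⟩ :=
    (S ∪ T).exists_max_image (fun s => |(f s : ℝ) - g s|) (hS.mono subset_union_left)
  refine ⟨z, fun x => abs_sub_le_iff.2 ⟨?_, ?_⟩⟩
  · obtain ⟨t, ht, hgx⟩ := hgT x
    calc (f x : ℝ) - g x ≤ f t - g t := f.sub_le_sub_of_eq_add_dist g hgx
      _ ≤ |(f t : ℝ) - g t| := le_abs_self _
      _ ≤ _ := hz t (mem_union_right S ht)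
  · obtain ⟨s, hs, hfx⟩ := hfS x
    calc (g x : ℝ) - f x ≤ g s - f s := g.sub_le_sub_of_eq_add_dist f hfx
      _ ≤ |(f s : ℝ) - g s| := neg_sub (f s : ℝ) (g s) ▸ neg_le_abs _
      _ ≤ _ := hz s (mem_union_left T hs)

noncomputable instance : Dist (FinKatetov X) := ⟨fun f g => ⨆ x, |(f x : ℝ) - g x|⟩

theorem dist_def (f g : FinKatetov X) : dist f g = ⨆ x, |(f x : ℝ) - g x| := rfl

theorem bddAbove_abs_sub (f g : FinKatetov X) :
    BddAbove (Set.range fun x => |(f x : ℝ) - g x|) :=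
  let ⟨_, hz⟩ := f.exists_forall_abs_sub_le g
  ⟨_, Set.forall_mem_range.2 hz⟩

theorem abs_sub_le_dist (f g : FinKatetov X) (x : X) : |(f x : ℝ) - g x| ≤ dist f g :=
  le_ciSup (f.bddAbove_abs_sub g) x

theorem exists_dist_eq (f g : FinKatetov X) : ∃ z, dist f g = |(f z : ℝ) - g z| := by
  obtain ⟨z, hz⟩ := f.exists_forall_abs_sub_le g
  have : Nonempty X := ⟨z⟩
  exact ⟨z, le_antisymm (ciSup_le hz) (f.abs_sub_le_dist g z)⟩

noncomputable instance : MetricSpace (FinKatetov X) where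
  dist_self f := by simp [dist_def]
  dist_comm f g := by simp only [dist_def, abs_sub_comm]
  dist_triangle f g h := by
    obtain ⟨z, hz⟩ := f.exists_dist_eq h
    rw [hz]
    exact (abs_sub_le _ _ _).trans (add_le_add (f.abs_sub_le_dist g z) (g.abs_sub_le_dist h z))
  eq_of_dist_eq_zero {f g} h := ext fun x => by
    have := f.abs_sub_le_dist g x
    rw [h, abs_nonpos_iff, sub_eq_zero] at this
    exact_mod_cast this

theorem rationalDistances : RationalDistances (FinKatetov X) := fun f g =>
  let ⟨z, hz⟩ := f.exists_dist_eq g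
  ⟨|f z - g z|, by rw [hz]; push_cast; rfl⟩

theorem le_of_eqOn_support (f g : FinKatetov X) {S : Finset X}
    (hS : ∀ x, ∃ s ∈ S, (f x : ℝ) = f s + dist s x) (hfg : ∀ s ∈ S, f s = g s) (x : X) :
    g x ≤ f x := by
  obtain ⟨s, hs, hfx⟩ := hS x
  have hgs : (g s : ℝ) = f s := by exact_mod_cast (hfg s hs).symm
  have : (g x : ℝ) ≤ f x := by linarith [g.le_add_dist x s, dist_comm x s]
  exact_mod_cast this

noncomputable def support (f : FinKatetov X) : Finset X := f.exists_support.choose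

theorem eq_add_dist_support (f : FinKatetov X) (x : X) :
    ∃ s ∈ f.support, (f x : ℝ) = f s + dist s x :=
  f.exists_support.choose_spec.2 x

instance [Countable X] : Countable (FinKatetov X) := by
  classical
  refine Function.Injective.countable
    (f := fun f : FinKatetov X => f.support.image fun s => (s, f s)) fun f g hfg => ?_
  have agree : ∀ {f g : FinKatetov X}, f.support.image (fun s => (s, f s)) =
      g.support.image (fun s => (s, g s)) → ∀ s ∈ f.support, f s = g s := by
    intro f g hfg s hs
    obtain ⟨t, -, hts⟩ := mem_image.1 (hfg ▸ mem_image_of_mem (fun s => (s, f s)) hs)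
    obtain ⟨rfl, h⟩ := Prod.ext_iff.1 hts
    exact h.symm
  exact ext fun x => le_antisymm
    (g.le_of_eqOn_support f g.eq_add_dist_support (fun s hs => (agree hfg.symm s hs)) x)
    (f.le_of_eqOn_support g f.eq_add_dist_support (agree hfg) x)

section

variable (hX : RationalDistances X)

noncomputable def ofPoint (x : X) : FinKatetov X where
  toFun := hX.ratDist x
  le_add_dist' y z := by
    simp only [hX.coe_ratDist]
    linarith [dist_triangle x z y, dist_comm y z]
  dist_le_add' y z := by
    simp only [hX.coe_ratDist]
    linarith [dist_triangle y x z, dist_comm x y]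
  exists_support' := ⟨{x}, singleton_nonempty x, fun y => ⟨x, mem_singleton_self x, by
    simp [hX.coe_ratDist]⟩⟩

theorem coe_ofPoint_apply (x y : X) : (ofPoint hX x y : ℝ) = dist x y := hX.coe_ratDist x y

theorem dist_ofPoint (f : FinKatetov X) (x : X) : dist f (ofPoint hX x) = f x := by
  have hfx : 0 ≤ (f x : ℝ) := by linarith [f.dist_le_add x x, dist_self x]
  have : Nonempty X := ⟨x⟩
  apply le_antisymm
  · refine ciSup_le fun y => ?_
    rw [coe_ofPoint_apply, abs_sub_le_iff]
    constructor
    · linarith [f.le_add_dist y x, dist_comm x y]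
    · linarith [f.dist_le_add x y]
  · simpa [coe_ofPoint_apply, abs_of_nonneg hfx] using f.abs_sub_le_dist (ofPoint hX x) x

theorem isometry_ofPoint : Isometry (ofPoint hX) :=
  Isometry.of_dist_eq fun x y => by rw [dist_ofPoint, coe_ofPoint_apply]

end

theorem exists_apply_eq (hX : RationalDistances X) {ι : Type*} [Fintype ι] [Nonempty ι]
    (p : ι → X) (r : ι → ℚ)
    (hr : ∀ i j, (r i : ℝ) ≤ r j + dist (p i) (p j))
    (hr' : ∀ i j, dist (p i) (p j) ≤ r i + r j) :
    ∃ f : FinKatetov X, ∀ i, f (p i) = r i := by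
  classical
  set g : X → ℚ := fun x => univ.inf' univ_nonempty fun i => r i + hX.ratDist (p i) x
  have g_le (x : X) (i : ι) : (g x : ℝ) ≤ r i + dist (p i) x := by
    rw [← hX.coe_ratDist]; exact_mod_cast inf'_le _ (mem_univ i)
  have g_eq (x : X) : ∃ i, (g x : ℝ) = r i + dist (p i) x := by
    obtain ⟨i, -, hi⟩ := exists_mem_eq_inf' univ_nonempty fun i => r i + hX.ratDist (p i) x
    exact ⟨i, by rw [← hX.coe_ratDist]; exact_mod_cast hi⟩
  have g_apply (i : ι) : (g (p i) : ℝ) = r i := by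
    obtain ⟨j, hj⟩ := g_eq (p i)
    linarith [g_le (p i) i, dist_self (p i), hr i j, dist_comm (p i) (p j)]
  refine ⟨⟨g, fun x y => ?_, fun x y => ?_, univ.image p, univ_nonempty.image p, fun x => ?_⟩,
    fun i => by exact_mod_cast g_apply i⟩
  · obtain ⟨j, hj⟩ := g_eq y
    linarith [g_le x j, dist_triangle (p j) y x, dist_comm x y]
  · obtain ⟨i, hi⟩ := g_eq x
    obtain ⟨j, hj⟩ := g_eq y
    linarith [dist_triangle x (p i) y, dist_triangle (p i) (p j) y, dist_comm x (p i), hr' i j]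
  · obtain ⟨i, hi⟩ := g_eq x
    exact ⟨p i, mem_image_of_mem p (mem_univ i), by rw [hi, g_apply]⟩

end FinKatetov

namespace Metric

variable {X : ℕ → Type*} [∀ n, MetricSpace (X n)] {f : ∀ n, X n → X (n + 1)}
  (I : ∀ n, Isometry (f n))

theorem toInductiveLimit_leRecOn {m n : ℕ} (h : m ≤ n) (x : X m) :
    toInductiveLimit I n (Nat.leRecOn h (f _) x) = toInductiveLimit I m x := by
  induction n, h using Nat.le_induction with
  | base => rw [Nat.leRecOn_self]
  | succ n hmn ih =>
    rw [Nat.leRecOn_succ hmn, ← ih]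
    exact congrFun (toInductiveLimit_commute I n) _

theorem exists_toInductiveLimit_eq (y : InductiveLimit I) : ∃ n x, toInductiveLimit I n x = y :=
  let ⟨⟨n, x⟩, hx⟩ := Quotient.mk''_surjective y
  ⟨n, x, hx⟩

theorem exists_toInductiveLimit_eq_of_finite {ι : Type*} [Finite ι]
    (y : ι → InductiveLimit I) :
    ∃ N, ∃ x : ι → X N, ∀ i, toInductiveLimit I N (x i) = y i := by
  choose n x hx using fun i => exists_toInductiveLimit_eq I (y i)
  obtain ⟨N, hN⟩ := Finite.exists_le n
  exact ⟨N, fun i => Nat.leRecOn (hN i) (f _) (x i),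
    fun i => (toInductiveLimit_leRecOn I (hN i) (x i)).trans (hx i)⟩

instance [∀ n, Countable (X n)] : Countable (InductiveLimit I) :=
  Quotient.mk''_surjective.countable

end Metric

/-- The conditions on `r` say that a new point at distances `r i` from the `p i` is consistent
with the triangle inequality. -/
def HasExtensionProperty (U : Type*) [MetricSpace U] : Prop :=
  ∀ (n : ℕ) (p : Fin n → U) (r : Fin n → ℚ),
    (∀ i j, (r i : ℝ) ≤ r j + dist (p i) (p j)) → (∀ i j, dist (p i) (p j) ≤ r i + r j) →
    ∃ z, ∀ i, dist z (p i) = r i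

theorem HasExtensionProperty.exists_dist_eq {U : Type*} [MetricSpace U]
    (hU : HasExtensionProperty U) {ι : Type*} [Finite ι] (p : ι → U) (r : ι → ℚ)
    (hr : ∀ i j, (r i : ℝ) ≤ r j + dist (p i) (p j))
    (hr' : ∀ i j, dist (p i) (p j) ≤ r i + r j) :
    ∃ z, ∀ i, dist z (p i) = r i := by
  obtain ⟨n, ⟨e⟩⟩ := Finite.exists_equiv_fin ι
  obtain ⟨z, hz⟩ := hU n (p ∘ e.symm) (r ∘ e.symm) (fun i j => hr _ _) (fun i j => hr' _ _)
  exact ⟨z, fun i => by simpa using hz (e i)⟩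

noncomputable def katetovTower : ℕ → Σ X : Type, MetricSpace X
  | 0 => ⟨PUnit, inferInstance⟩
  | n + 1 => letI := (katetovTower n).2; ⟨FinKatetov (katetovTower n).1, inferInstance⟩

abbrev KatetovStage (n : ℕ) : Type := (katetovTower n).1

noncomputable instance (n : ℕ) : MetricSpace (KatetovStage n) := (katetovTower n).2

theorem rationalDistances_katetovStage : ∀ n, RationalDistances (KatetovStage n)
  | 0 => fun _ _ => ⟨0, by rw [Rat.cast_zero, dist_eq_zero]; rfl⟩
  | n + 1 => FinKatetov.rationalDistances (X := KatetovStage n)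

instance countable_katetovStage : ∀ n, Countable (KatetovStage n)
  | 0 => inferInstanceAs (Countable PUnit)
  | n + 1 =>
    have := countable_katetovStage n
    inferInstanceAs (Countable (FinKatetov (KatetovStage n)))

noncomputable def katetovStep (n : ℕ) : KatetovStage n → KatetovStage (n + 1) :=
  FinKatetov.ofPoint (rationalDistances_katetovStage n)

theorem isometry_katetovStep (n : ℕ) : Isometry (katetovStep n) :=
  FinKatetov.isometry_ofPoint _

theorem exists_dist_katetovStep_eq {N : ℕ} {ι : Type*} [Fintype ι] [Nonempty ι]
    (x : ι → KatetovStage N) (r : ι → ℚ)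
    (hr : ∀ i j, (r i : ℝ) ≤ r j + dist (x i) (x j))
    (hr' : ∀ i j, dist (x i) (x j) ≤ r i + r j) :
    ∃ f : KatetovStage (N + 1), ∀ i, dist f (katetovStep N (x i)) = r i := by
  obtain ⟨f, hf⟩ := FinKatetov.exists_apply_eq (rationalDistances_katetovStage N) x r hr hr'
  exact ⟨f, fun i => (FinKatetov.dist_ofPoint _ f (x i)).trans (by rw [hf])⟩

abbrev RationalUrysohn : Type := Metric.InductiveLimit isometry_katetovStep

namespace RationalUrysohn

instance : Nonempty RationalUrysohn :=
  ⟨Metric.toInductiveLimit isometry_katetovStep 0 PUnit.unit⟩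

theorem rationalDistances : RationalDistances RationalUrysohn := by
  intro x y
  obtain ⟨N, z, hz⟩ := Metric.exists_toInductiveLimit_eq_of_finite isometry_katetovStep ![x, y]
  rw [show x = _ from (hz 0).symm, show y = _ from (hz 1).symm,
    (Metric.toInductiveLimit_isometry _ N).dist_eq]
  exact rationalDistances_katetovStage N _ _

theorem hasExtensionProperty : HasExtensionProperty RationalUrysohn := by
  intro n p r hr hr'
  rcases isEmpty_or_nonempty (Fin n) with hn | hn
  · exact ⟨Classical.arbitrary _, isEmptyElim⟩
  obtain ⟨N, x, hx⟩ := Metric.exists_toInductiveLimit_eq_of_finite isometry_katetovStep p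
  have hdist (i j) : dist (x i) (x j) = dist (p i) (p j) := by
    rw [← hx i, ← hx j, (Metric.toInductiveLimit_isometry _ N).dist_eq]
  obtain ⟨f, hf⟩ := exists_dist_katetovStep_eq x r (fun i j => hdist i j ▸ hr i j)
    (fun i j => hdist i j ▸ hr' i j)
  refine ⟨Metric.toInductiveLimit isometry_katetovStep (N + 1) f, fun i => ?_⟩
  rw [← hx i, ← Metric.toInductiveLimit_commute isometry_katetovStep N, Function.comp_apply,
    (Metric.toInductiveLimit_isometry _ (N + 1)).dist_eq, hf]

end RationalUrysohn

/-- Finite partial isometries from `α` to `β`, as finite sets of pairs to be identified. -/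
def FinPartialIsometry (α β : Type*) [MetricSpace α] [MetricSpace β] : Type _ :=
  {s : Finset (α × β) // ∀ p ∈ s, ∀ q ∈ s, dist p.2 q.2 = dist p.1 q.1}

namespace FinPartialIsometry

variable {α β : Type*} [MetricSpace α] [MetricSpace β]

instance : Preorder (FinPartialIsometry α β) :=
  inferInstanceAs (Preorder (Subtype _))

theorem exists_dist_eq_dist (hα : RationalDistances α) (hβ : HasExtensionProperty β)
    {ι : Type*} [Finite ι] (p : ι → α) (q : ι → β)
    (hpq : ∀ i j, dist (q i) (q j) = dist (p i) (p j)) (a : α) :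
    ∃ b, ∀ i, dist b (q i) = dist a (p i) := by
  simp only [← hα.coe_ratDist a]
  refine hβ.exists_dist_eq q _ (fun i j => ?_) (fun i j => ?_)
  · rw [hα.coe_ratDist, hα.coe_ratDist, hpq]
    exact dist_triangle_right _ _ _
  · rw [hα.coe_ratDist, hα.coe_ratDist, hpq]
    exact dist_triangle_left _ _ _

theorem dist_eq_of_mem_ideal (I : Order.Ideal (FinPartialIsometry α β))
    {s t : FinPartialIsometry α β} (hs : s ∈ I) (ht : t ∈ I) {p q : α × β}
    (hp : p ∈ s.1) (hq : q ∈ t.1) :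
    dist p.2 q.2 = dist p.1 q.1 :=
  let ⟨u, _, hsu, htu⟩ := I.directed s hs t ht
  u.2 p (hsu hp) q (htu hq)

theorem exists_isometry_of_ideal (I : Order.Ideal (FinPartialIsometry α β))
    (hI : ∀ a, ∃ s ∈ I, ∃ b, (a, b) ∈ s.1) :
    ∃ φ : α → β, Isometry φ ∧ ∀ s ∈ I, ∀ p ∈ s.1, φ p.1 = p.2 := by
  choose s hs φ hφ using hI
  refine ⟨φ, .of_dist_eq fun a a' => dist_eq_of_mem_ideal I (hs a) (hs a') (hφ a) (hφ a'),
    fun t ht p hp => dist_eq_zero.1 ?_⟩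
  rw [dist_eq_of_mem_ideal I (hs p.1) ht (hφ p.1) hp, dist_self]

section

variable [DecidableEq α] [DecidableEq β]

def insert (s : FinPartialIsometry α β) (a : α) (b : β)
    (h : ∀ p ∈ s.1, dist b p.2 = dist a p.1) : FinPartialIsometry α β :=
  ⟨Insert.insert (a, b) s.1, by
    simp only [Finset.forall_mem_insert, dist_self, true_and]
    exact ⟨h, fun p hp => ⟨by rw [dist_comm, h p hp, dist_comm], s.2 p hp⟩⟩⟩

theorem le_insert (s : FinPartialIsometry α β) (a : α) (b : β)
    (h : ∀ p ∈ s.1, dist b p.2 = dist a p.1) : s ≤ s.insert a b h :=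
  Finset.subset_insert _ _

theorem mem_insert_self (s : FinPartialIsometry α β) (a : α) (b : β)
    (h : ∀ p ∈ s.1, dist b p.2 = dist a p.1) : (a, b) ∈ (s.insert a b h).1 :=
  Finset.mem_insert_self _ _

def definedAtLeft (hα : RationalDistances α) (hβ : HasExtensionProperty β) (a : α) :
    Order.Cofinal (FinPartialIsometry α β) where
  carrier := {s | ∃ b, (a, b) ∈ s.1}
  isCofinal s := by
    obtain ⟨b, hb⟩ := exists_dist_eq_dist hα hβ (fun p : s.1 => p.1.1) (fun p => p.1.2)
      (fun p q => s.2 p.1 p.2 q.1 q.2) a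
    exact ⟨s.insert a b fun p hp => hb ⟨p, hp⟩, ⟨b, mem_insert_self ..⟩, le_insert ..⟩

def definedAtRight (hα : HasExtensionProperty α) (hβ : RationalDistances β) (b : β) :
    Order.Cofinal (FinPartialIsometry α β) where
  carrier := {s | ∃ a, (a, b) ∈ s.1}
  isCofinal s := by
    obtain ⟨a, ha⟩ := exists_dist_eq_dist hβ hα (fun p : s.1 => p.1.2) (fun p => p.1.1)
      (fun p q => (s.2 p.1 p.2 q.1 q.2).symm) b
    exact ⟨s.insert a b fun p hp => (ha ⟨p, hp⟩).symm, ⟨a, mem_insert_self ..⟩,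
      le_insert ..⟩

end

variable [Countable α]

theorem exists_isometry_extending (hα : RationalDistances α) (hβ : HasExtensionProperty β)
    (s : FinPartialIsometry α β) :
    ∃ φ : α → β, Isometry φ ∧ ∀ p ∈ s.1, φ p.1 = p.2 := by
  classical
  have := Encodable.ofCountable α
  let I := Order.idealOfCofinals s (definedAtLeft hα hβ)
  obtain ⟨φ, hφ, hφI⟩ := exists_isometry_of_ideal I fun a =>
    let ⟨t, ht, htI⟩ := Order.cofinal_meets_idealOfCofinals s (definedAtLeft hα hβ) a
    ⟨t, htI, ht⟩
  exact ⟨φ, hφ, hφI s (Order.mem_idealOfCofinals s _)⟩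

theorem exists_isometryEquiv_extending [Countable β] (hα : RationalDistances α)
    (hα' : HasExtensionProperty α) (hβ : RationalDistances β) (hβ' : HasExtensionProperty β)
    (s : FinPartialIsometry α β) : ∃ φ : α ≃ᵢ β, ∀ p ∈ s.1, φ p.1 = p.2 := by
  classical
  have := Encodable.ofCountable α
  have := Encodable.ofCountable β
  let D : α ⊕ β → Order.Cofinal (FinPartialIsometry α β) :=
    Sum.elim (definedAtLeft hα hβ') (definedAtRight hα' hβ)
  let I := Order.idealOfCofinals s D
  obtain ⟨φ, hφ, hφI⟩ := exists_isometry_of_ideal I fun a =>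
    let ⟨t, ht, htI⟩ := Order.cofinal_meets_idealOfCofinals s D (.inl a)
    ⟨t, htI, ht⟩
  have hsurj : Function.Surjective φ := fun b =>
    let ⟨t, ⟨a, ha⟩, htI⟩ := Order.cofinal_meets_idealOfCofinals s D (.inr b)
    ⟨a, hφI t htI (a, b) ha⟩
  exact ⟨IsometryEquiv.mk' φ (Function.surjInv hsurj) (Function.rightInverse_surjInv hsurj) hφ,
    hφI s (Order.mem_idealOfCofinals s D)⟩

end FinPartialIsometry

section

variable {U : Type*} [MetricSpace U]

theorem HasExtensionProperty.universalForRationalMS (hU : HasExtensionProperty U) :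
    UniversalForRationalMS.{u} U := by
  intro X _ _ hX
  obtain ⟨φ, hφ, -⟩ := FinPartialIsometry.exists_isometry_extending hX hU ⟨∅, by simp⟩
  exact ⟨φ, hφ.dist_eq⟩

theorem HasExtensionProperty.ultrahomogeneousMS [Countable U] (hU : HasExtensionProperty U)
    (hU' : RationalDistances U) : UltrahomogeneousMS U := by
  classical
  intro S T e he
  let s : FinPartialIsometry U U :=
    ⟨Finset.univ.image fun x : (S : Set U) => ((x : U), (e x : U)), by
      simp only [Finset.forall_mem_image, Finset.mem_univ, forall_const]
      exact he⟩
  obtain ⟨φ, hφ⟩ := FinPartialIsometry.exists_isometryEquiv_extending hU' hU hU' hU s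
  exact ⟨φ, fun x => hφ _ (Finset.mem_image_of_mem _ (Finset.mem_univ x))⟩

end

/-- The rational Urysohn space exists: a countable nonempty metric space with rational
distances which is ultrahomogeneous and universal for countable metric spaces with
rational distances. -/
theorem exists_rational_urysohn_space :
    ∃ (U : Type) (m : MetricSpace U), Countable U ∧ Nonempty U ∧
      @RationalDistances U m ∧ @UltrahomogeneousMS U m ∧ @UniversalForRationalMS.{u} U m :=
  ⟨RationalUrysohn, inferInstance, inferInstance, inferInstance,
    RationalUrysohn.rationalDistances,
    RationalUrysohn.hasExtensionProperty.ultrahomogeneousMS RationalUrysohn.rationalDistances,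
    RationalUrysohn.hasExtensionProperty.universalForRationalMS⟩
end

section
/- Let 𝒲 be the set of finite sets A of finite words over the alphabet {0,1} (lists of Booleans) such that no two distinct words W, W' in A satisfy that W' is a prefix of W, ordered by: A ≤ B iff for every W ∈ A there exists W' ∈ B such that W' is a prefix of W. Then (𝒲, ≤) is a partial order, and it is universal: for every partial order P on a countable type there is a map f : P → 𝒲 such that p ≤ q if and only if f p ≤ f q. -/
/-!
A clopen subset of Cantor space `Bool^ℕ` is coded by the finite antichain of its minimal words,
and under this coding `Wle` is inclusion. So it suffices to realise a countable preorder,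
enumerated injectively by `e : P → ℕ`, by sets `V p` depending only on the coordinates `≤ e p`.
By recursion on `e p`, let `V p` be the union of the earlier `V q` with `q ≤ p`, together with
the points of the intersection of the earlier `V q` with `p ≤ q` whose bit `e p` is set. This is
monotone, and if `p ≰ q`, the point whose bit `e r` says whether `p ≤ r` lies in `V p` but not
in `V q`.
-/

/-- `A` is a finite antichain of binary words under the prefix relation. -/
def WAntichain (A : Finset (List Bool)) : Prop :=
  ∀ W ∈ A, ∀ W' ∈ A, W ≠ W' → ¬ W' <+: W

/-- The order on finite sets of binary words: `A ≤ B` iff every word of `A` has a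
prefix belonging to `B`. -/
def Wle (A B : Finset (List Bool)) : Prop :=
  ∀ W ∈ A, ∃ W' ∈ B, W' <+: W

theorem Wle.refl (A : Finset (List Bool)) : Wle A A :=
  fun W hW => ⟨W, hW, List.prefix_refl W⟩

theorem Wle.trans {A B C : Finset (List Bool)} (hAB : Wle A B) (hBC : Wle B C) : Wle A C := by
  intro W hW
  obtain ⟨W', hW', hW'W⟩ := hAB W hW
  obtain ⟨W'', hW'', hW''W'⟩ := hBC W' hW'
  exact ⟨W'', hW'', hW''W'.trans hW'W⟩

theorem subset_of_wle_of_wle {A B : Finset (List Bool)} (hA : WAntichain A) (hAB : Wle A B)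
    (hBA : Wle B A) : A ⊆ B := by
  intro W hW
  obtain ⟨W', hW', hW'W⟩ := hAB W hW
  obtain ⟨W'', hW'', hW''W'⟩ := hBA W' hW'
  obtain rfl : W'' = W := by_contra fun hne => hA W hW W'' hW'' (Ne.symm hne) (hW''W'.trans hW'W)
  rwa [antisymm hW'W hW''W'] at hW'

theorem Wle.antisymm {A B : Finset (List Bool)} (hA : WAntichain A) (hB : WAntichain B)
    (hAB : Wle A B) (hBA : Wle B A) : A = B :=
  (subset_of_wle_of_wle hA hAB hBA).antisymm (subset_of_wle_of_wle hB hBA hAB)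

theorem Stream'.take_eq_take_iff {α : Type*} {x y : Stream' α} {d : ℕ} :
    x.take d = y.take d ↔ ∀ i < d, x.get i = y.get i := by
  refine ⟨fun h i hi => ?_, fun h => List.ext_getElem (by simp) fun i hi _ => ?_⟩
  · simpa [Stream'.getElem?_take hi] using congrArg (·[i]?) h
  · simpa using h i (by simpa using hi)

section Cylinder

variable {α : Type*}

def cylinder (w : List α) : Set (Stream' α) :=
  {x | x.take w.length = w}

def DeterminedUpTo (V : Set (Stream' α)) (d : ℕ) : Prop :=
  ∀ ⦃x y : Stream' α⦄, x.take d = y.take d → x ∈ V → y ∈ V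

def minimalWords (V : Set (Stream' α)) : Set (List α) :=
  {w | cylinder w ⊆ V ∧ ∀ u, u <+: w → cylinder u ⊆ V → u = w}

theorem mem_cylinder_take (x : Stream' α) (n : ℕ) : x ∈ cylinder (x.take n) := by
  simp [cylinder]

theorem cylinder_anti {u w : List α} (h : u <+: w) : cylinder w ⊆ cylinder u := by
  intro x (hx : x.take w.length = w)
  calc x.take u.length = (x.take w.length).take u.length := by
        rw [Stream'.take_take, min_eq_right h.length_le]
    _ = u := by rw [hx, ← List.prefix_iff_eq_take.mp h]

variable {V : Set (Stream' α)} {d : ℕ}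

theorem DeterminedUpTo.cylinder_take_subset (hV : DeterminedUpTo V d) {x : Stream' α}
    (hx : x ∈ V) : cylinder (x.take d) ⊆ V :=
  fun y hy => hV (by simpa [cylinder] using hy.symm) hx

theorem DeterminedUpTo.cylinder_take_subset_of_cylinder_subset (hV : DeterminedUpTo V d)
    {w : List α} (hw : cylinder w ⊆ V) : cylinder (w.take d) ⊆ V := by
  rcases le_total w.length d with hle | hle
  · rwa [List.take_of_length_le hle]
  intro y hy
  -- extend `w` by `y` to a point of `cylinder w` that agrees with `y` up to `d`
  have hwy : w ++ₛ y ∈ cylinder w := by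
    simp [cylinder, Stream'.take_append_of_le_length]
  refine hV ?_ (hw hwy)
  simp only [cylinder, List.length_take, min_eq_left hle, Set.mem_ofPred_eq] at hy
  rw [Stream'.take_append_of_le_length _ _ _ hle, hy]

theorem exists_prefix_mem_minimalWords {w : List α} (hw : cylinder w ⊆ V) :
    ∃ u, u <+: w ∧ u ∈ minimalWords V := by
  classical
  have hex : ∃ k, cylinder (w.take k) ⊆ V := ⟨w.length, by rwa [List.take_length]⟩
  refine ⟨w.take (Nat.find hex), List.take_prefix _ _, Nat.find_spec hex, fun u hu hcu => ?_⟩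
  have huw : u <+: w := hu.trans (List.take_prefix _ _)
  have hmin : Nat.find hex ≤ u.length :=
    Nat.find_min' hex (by rwa [← List.prefix_iff_eq_take.mp huw])
  exact hu.eq_of_length (le_antisymm hu.length_le ((List.length_take_le _ _).trans hmin))

theorem DeterminedUpTo.length_le_of_mem_minimalWords (hV : DeterminedUpTo V d) {w : List α}
    (hw : w ∈ minimalWords V) : w.length ≤ d := by
  rw [← List.take_eq_self_iff]
  exact hw.2 _ (List.take_prefix _ _) (hV.cylinder_take_subset_of_cylinder_subset hw.1)

theorem DeterminedUpTo.finite_minimalWords [Finite α] (hV : DeterminedUpTo V d) :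
    (minimalWords V).Finite :=
  (List.finite_length_le α d).subset fun _ hw => hV.length_le_of_mem_minimalWords hw

theorem DeterminedUpTo.exists_mem_minimalWords (hV : DeterminedUpTo V d) {x : Stream' α}
    (hx : x ∈ V) : ∃ w ∈ minimalWords V, x ∈ cylinder w := by
  obtain ⟨w, hw, hwV⟩ := exists_prefix_mem_minimalWords (hV.cylinder_take_subset hx)
  exact ⟨w, hwV, cylinder_anti hw (mem_cylinder_take x d)⟩

end Cylinder

theorem wAntichain_minimalWords {V : Set (Stream' Bool)} (hV : (minimalWords V).Finite) :
    WAntichain hV.toFinset := by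
  intro W hW W' hW' hne hW'W
  rw [Set.Finite.mem_toFinset] at hW hW'
  exact hne (hW.2 W' hW'W hW'.1).symm

theorem wle_minimalWords_iff {V V' : Set (Stream' Bool)} {d : ℕ} (hV : DeterminedUpTo V d)
    (hfin : (minimalWords V).Finite) (hfin' : (minimalWords V').Finite) :
    Wle hfin.toFinset hfin'.toFinset ↔ V ⊆ V' := by
  simp only [Wle, Set.Finite.mem_toFinset]
  refine ⟨fun hle x hx => ?_, fun hsub w hw => ?_⟩
  · obtain ⟨w, hw, hxw⟩ := hV.exists_mem_minimalWords hx
    obtain ⟨u, hu, huw⟩ := hle w hw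
    exact hu.1 (cylinder_anti huw hxw)
  · obtain ⟨u, huw, hu⟩ := exists_prefix_mem_minimalWords (hw.1.trans hsub)
    exact ⟨u, hu, huw⟩

theorem exists_get_eq_true_iff {ι : Type*} {e : ι → ℕ} (he : e.Injective) (U : Set ι) :
    ∃ x : Stream' Bool, ∀ r, x.get (e r) = true ↔ r ∈ U := by
  classical
  exact ⟨fun n => decide (∃ r ∈ U, e r = n), fun r => by simp [Stream'.get, he.eq_iff]⟩

section Realization

variable {P : Type*} [Preorder P] (e : P → ℕ)

noncomputable def realization (p : P) : Set (Stream' Bool) :=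
  (⋃ q : {q // q ≤ p ∧ e q < e p}, realization q) ∪
    ({x | x.get (e p) = true} ∩ ⋂ q : {q // p ≤ q ∧ e q < e p}, realization q)
termination_by e p
decreasing_by all_goals exact q.2.2

theorem mem_realization {p : P} {x : Stream' Bool} :
    x ∈ realization e p ↔ (∃ q, q ≤ p ∧ e q < e p ∧ x ∈ realization e q) ∨
      (x.get (e p) = true ∧ ∀ q, p ≤ q → e q < e p → x ∈ realization e q) := by
  rw [realization]
  simp [and_assoc]

theorem determinedUpTo_realization (p : P) : DeterminedUpTo (realization e p) (e p + 1) := by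
  induction p using (measure e).wf.induction with
  | _ p ih =>
  intro x y hxy hx
  rw [Stream'.take_eq_take_iff] at hxy
  have hlt {q : P} (hq : e q < e p) : x.take (e q + 1) = y.take (e q + 1) :=
    Stream'.take_eq_take_iff.2 fun i hi => hxy i (by omega)
  rw [mem_realization] at hx ⊢
  rcases hx with ⟨q, hqp, hq, hxq⟩ | ⟨hxp, hx⟩
  · exact Or.inl ⟨q, hqp, hq, ih q hq (hlt hq) hxq⟩
  · exact Or.inr ⟨hxy (e p) (by omega) ▸ hxp, fun q hpq hq => ih q hq (hlt hq) (hx q hpq hq)⟩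

variable {e}

theorem monotone_realization (he : e.Injective) : Monotone (realization e) := by
  intro p q hpq
  induction p using (measure e).wf.induction with
  | _ p ih =>
  intro x hx
  rcases lt_trichotomy (e p) (e q) with hlt | heq | hgt
  · exact (mem_realization e).2 (Or.inl ⟨p, hpq, hlt, hx⟩)
  · rwa [← he heq]
  · rcases (mem_realization e).1 hx with ⟨s, hsp, hs, hxs⟩ | ⟨-, hx⟩
    · exact ih s hs (hsp.trans hpq) hxs
    · exact hx q hpq hgt

theorem mem_realization_iff_of_isUpperSet {U : Set P} (hU : IsUpperSet U) {x : Stream' Bool}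
    (hx : ∀ r, x.get (e r) = true ↔ r ∈ U) (r : P) : x ∈ realization e r ↔ r ∈ U := by
  induction r using (measure e).wf.induction with
  | _ r ih =>
  rw [mem_realization]
  refine ⟨?_, fun hr => Or.inr ⟨(hx r).2 hr, fun q hrq hq => (ih q hq).2 (hU hrq hr)⟩⟩
  rintro (⟨q, hqr, hq, hxq⟩ | ⟨hxr, -⟩)
  · exact hU hqr ((ih q hq).1 hxq)
  · exact (hx r).1 hxr

theorem realization_subset_realization_iff (he : e.Injective) {p q : P} :
    realization e p ⊆ realization e q ↔ p ≤ q := by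
  refine ⟨fun hpq => ?_, fun hpq => monotone_realization he hpq⟩
  obtain ⟨x, hx⟩ := exists_get_eq_true_iff he (Set.Ici p)
  have hmem := mem_realization_iff_of_isUpperSet (isUpperSet_Ici p) hx
  exact (hmem q).1 (hpq ((hmem p).2 le_rfl))

end Realization

/-- `(𝒲, ≤)` is a partial order (reflexive, transitive and antisymmetric on antichains)
and is universal for countable partial orders. -/
theorem W_partialOrder_and_universal :
    (∀ A : Finset (List Bool), WAntichain A → Wle A A) ∧
    (∀ A B C : Finset (List Bool), WAntichain A → WAntichain B → WAntichain C →
      Wle A B → Wle B C → Wle A C) ∧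
    (∀ A B : Finset (List Bool), WAntichain A → WAntichain B →
      Wle A B → Wle B A → A = B) ∧
    (∀ (P : Type) [Countable P] [PartialOrder P],
      ∃ f : P → Finset (List Bool), (∀ p, WAntichain (f p)) ∧
        ∀ p q : P, p ≤ q ↔ Wle (f p) (f q)) := by
  refine ⟨fun A _ => Wle.refl A, fun A B C _ _ _ => Wle.trans,
    fun A B hA hB => Wle.antisymm hA hB, fun P _ _ => ?_⟩
  obtain ⟨e, he⟩ := Countable.exists_injective_nat P
  have hdet (p : P) := determinedUpTo_realization e p
  have hfin (p : P) := (hdet p).finite_minimalWords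
  refine ⟨fun p => (hfin p).toFinset, fun p => wAntichain_minimalWords (hfin p), fun p q => ?_⟩
  rw [wle_minimalWords_iff (hdet p), realization_subset_realization_iff he]
end

section
/- Let ℐ be the set of finite sets A of pairs (a, b) of rationals with 0 ≤ a < b ≤ 1 such that the corresponding closed intervals [a, b] are pairwise disjoint, ordered by: A ≤ B iff for every (a, b) ∈ A there exists (a', b') ∈ B with a' ≤ a and b ≤ b'. Then (ℐ, ≤) is a partial order which is universal: for every partial order P on a countable type there is a map f : P → ℐ such that p ≤ q if and only if f p ≤ f q. -/
/-- A finite set of pairs of rationals encoding pairwise disjoint closed subintervals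
of `[0, 1]`. -/
def IsIntervalSet (A : Finset (ℚ × ℚ)) : Prop :=
  (∀ p ∈ A, 0 ≤ p.1 ∧ p.1 < p.2 ∧ p.2 ≤ 1) ∧
  ∀ p ∈ A, ∀ q ∈ A, p ≠ q → Disjoint (Set.Icc p.1 p.2) (Set.Icc q.1 q.2)

/-- `A ≤ B` iff every interval of `A` is contained in some interval of `B`. -/
def Ile (A B : Finset (ℚ × ℚ)) : Prop :=
  ∀ p ∈ A, ∃ q ∈ B, q.1 ≤ p.1 ∧ p.2 ≤ q.2

/-!
Antisymmetry: an interval of `A` covered by an interval of `B` that is itself covered by an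
interval of `A` must be that interval of `A`, since distinct intervals of `A` are disjoint.

Universality: fix an injection `e : P → ℕ` and code the upper set of `a`, truncated at index `c`,
by its characteristic bit string of length `c + 1`. Bit strings name the intervals of the Cantor
construction, so the prefix order becomes inclusion and incomparable strings give disjoint
intervals. Send `p` to the prefix-minimal codes `(a, c)` with `a ≤ b ≤ p` and `e b ≤ c ≤ e p`
for some `b`. If `p ≤ q`, each code of `p` either is a code of `q` or, truncated at `e q`, becomes
one (with `b = q`). Conversely, if the full code of `p` at `e p` has a prefix that is a code of `q`,
the bit of its witness `b ≤ q` is set, so `p ≤ b` by injectivity of `e`.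
-/

theorem ile_refl (A : Finset (ℚ × ℚ)) : Ile A A :=
  fun p hp => ⟨p, hp, le_rfl, le_rfl⟩

theorem ile_trans {A B C : Finset (ℚ × ℚ)} (hAB : Ile A B) (hBC : Ile B C) : Ile A C := by
  intro p hp
  obtain ⟨q, hq, hqp₁, hpq₂⟩ := hAB p hp
  obtain ⟨r, hr, hrq₁, hqr₂⟩ := hBC q hq
  exact ⟨r, hr, hrq₁.trans hqp₁, hpq₂.trans hqr₂⟩

theorem IsIntervalSet.eq_of_covers {A : Finset (ℚ × ℚ)} (hA : IsIntervalSet A) {p r : ℚ × ℚ}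
    (hp : p ∈ A) (hr : r ∈ A) (h₁ : r.1 ≤ p.1) (h₂ : p.2 ≤ r.2) : p = r := by
  by_contra hpr
  have hp₁ : p.1 ∈ Set.Icc p.1 p.2 := ⟨le_rfl, (hA.1 p hp).2.1.le⟩
  have hr₁ : p.1 ∈ Set.Icc r.1 r.2 := ⟨h₁, hp₁.2.trans h₂⟩
  exact Set.disjoint_left.1 (hA.2 p hp r hr hpr) hp₁ hr₁

theorem IsIntervalSet.subset_of_ile {A B : Finset (ℚ × ℚ)} (hA : IsIntervalSet A)
    (hAB : Ile A B) (hBA : Ile B A) : A ⊆ B := by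
  intro p hp
  obtain ⟨q, hq, hqp₁, hpq₂⟩ := hAB p hp
  obtain ⟨r, hr, hrq₁, hqr₂⟩ := hBA q hq
  obtain rfl := hA.eq_of_covers hp hr (hrq₁.trans hqp₁) (hpq₂.trans hqr₂)
  obtain rfl : q = p := Prod.ext (hqp₁.antisymm hrq₁) (hqr₂.antisymm hpq₂)
  exact hq

section PrefixMinimals

variable {α : Type*}

def PrefixDominated (S T : Finset (List α)) : Prop := ∀ s ∈ S, ∃ t ∈ T, t <+: s

variable [DecidableEq α]

def prefixMinimals (S : Finset (List α)) : Finset (List α) :=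
  S.filter fun s => ∀ t ∈ S, t <+: s → t = s

theorem exists_mem_prefixMinimals_prefix {S : Finset (List α)} {s : List α} (hs : s ∈ S) :
    ∃ m ∈ prefixMinimals S, m <+: s := by
  obtain ⟨m, ⟨hmS, hms⟩, hmin⟩ := (measure List.length).wf.has_min
    {t | t ∈ S ∧ t <+: s} ⟨s, hs, List.prefix_refl s⟩
  refine ⟨m, Finset.mem_filter.2 ⟨hmS, fun t htS htm => ?_⟩, hms⟩
  have : ¬ t.length < m.length := hmin t ⟨htS, htm.trans hms⟩
  exact htm.eq_of_length (le_antisymm htm.length_le (not_lt.1 this))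

theorem eq_of_mem_prefixMinimals {S : Finset (List α)} {s t : List α}
    (hs : s ∈ prefixMinimals S) (ht : t ∈ prefixMinimals S) (hst : s <+: t) : s = t :=
  (Finset.mem_filter.1 ht).2 s (Finset.mem_filter.1 hs).1 hst

theorem prefixDominated_prefixMinimals_iff {S T : Finset (List α)} :
    PrefixDominated (prefixMinimals S) (prefixMinimals T) ↔ PrefixDominated S T := by
  constructor
  · intro h s hs
    obtain ⟨m, hm, hms⟩ := exists_mem_prefixMinimals_prefix hs
    obtain ⟨t, ht, htm⟩ := h m hm
    exact ⟨t, Finset.filter_subset _ _ ht, htm.trans hms⟩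
  · intro h s hs
    obtain ⟨t, ht, hts⟩ := h s (Finset.filter_subset _ _ hs)
    obtain ⟨m, hm, hmt⟩ := exists_mem_prefixMinimals_prefix ht
    exact ⟨m, hm, hmt.trans hts⟩

end PrefixMinimals

namespace Cantor

def child (b : Bool) (x : ℚ) : ℚ := (x + if b then 2 else 0) / 3

def interval : List Bool → ℚ × ℚ
  | [] => (0, 1)
  | b :: l => (child b (interval l).1, child b (interval l).2)

theorem child_mono (b : Bool) : StrictMono (child b) := by
  intro x y h; unfold child; gcongr

theorem interval_width (l : List Bool) :
    (interval l).2 - (interval l).1 = (1 / 3) ^ l.length := by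
  induction l with
  | nil => simp [interval]
  | cons b l ih =>
    simp only [interval, child, List.length_cons, pow_succ, ← ih]
    ring

theorem interval_lt (l : List Bool) : (interval l).1 < (interval l).2 := by
  have hpos : (0 : ℚ) < (1 / 3) ^ l.length := by positivity
  linarith [interval_width l]

theorem interval_mem_unit (l : List Bool) : 0 ≤ (interval l).1 ∧ (interval l).2 ≤ 1 := by
  induction l with
  | nil => simp [interval]
  | cons b l ih =>
    simp only [interval, child]
    constructor <;> split <;> linarith [ih.1, ih.2, interval_lt l]

theorem interval_le_of_prefix {l l' : List Bool} (h : l <+: l') :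
    (interval l).1 ≤ (interval l').1 ∧ (interval l').2 ≤ (interval l).2 := by
  induction l generalizing l' with
  | nil => simpa [interval] using interval_mem_unit l'
  | cons b l ih =>
    cases l' with
    | nil => exact absurd h.length_le (by simp)
    | cons b' l' =>
      obtain ⟨rfl, hl⟩ := List.cons_prefix_cons.1 h
      exact ⟨(child_mono b).monotone (ih hl).1, (child_mono b).monotone (ih hl).2⟩

theorem interval_separated {l l' : List Bool} (h : ¬ l <+: l') (h' : ¬ l' <+: l) :
    (interval l).2 < (interval l').1 ∨ (interval l').2 < (interval l).1 := by
  induction l generalizing l' with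
  | nil => exact absurd l'.nil_prefix h
  | cons b l ih =>
    cases l' with
    | nil => exact absurd (b :: l).nil_prefix h'
    | cons b' l' =>
      simp only [List.cons_prefix_cons, not_and] at h h'
      simp only [interval]
      by_cases hb : b = b'
      · subst hb
        exact (ih (h rfl) (h' rfl)).imp (fun h => child_mono b h) (fun h => child_mono b h)
      · have hsep : ∀ x y : ℚ, 0 ≤ x → y ≤ 1 → child false y < child true x := by
          intro x y hx hy; simp only [child, Bool.false_eq_true, ↓reduceIte]; linarith
        cases b <;> cases b'
        · exact absurd rfl hb
        · exact Or.inl (hsep _ _ (interval_mem_unit l').1 (interval_mem_unit l).2)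
        · exact Or.inr (hsep _ _ (interval_mem_unit l).1 (interval_mem_unit l').2)
        · exact absurd rfl hb

theorem prefix_iff_interval_le {l l' : List Bool} :
    l <+: l' ↔ (interval l).1 ≤ (interval l').1 ∧ (interval l').2 ≤ (interval l).2 := by
  refine ⟨interval_le_of_prefix, fun ⟨h₁, h₂⟩ => ?_⟩
  by_contra hll'
  by_cases hl'l : l' <+: l
  · have hwidth : (1 / 3 : ℚ) ^ l'.length ≤ (1 / 3) ^ l.length := by
      rw [← interval_width, ← interval_width]
      linarith
    rw [pow_le_pow_iff_right_of_lt_one₀ (by norm_num) (by norm_num)] at hwidth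
    exact hll' (hl'l.eq_of_length (le_antisymm hl'l.length_le hwidth) ▸ List.prefix_refl l)
  · rcases interval_separated hll' hl'l with h | h <;>
      linarith [interval_lt l, interval_lt l']

theorem ile_image_interval_iff {S T : Finset (List Bool)} :
    Ile (S.image interval) (T.image interval) ↔ PrefixDominated S T := by
  simp only [Ile, PrefixDominated, Finset.forall_mem_image, Finset.exists_mem_image,
    prefix_iff_interval_le]

theorem isIntervalSet_image_interval {S : Finset (List Bool)}
    (hS : ∀ s ∈ S, ∀ t ∈ S, s <+: t → s = t) : IsIntervalSet (S.image interval) := by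
  refine ⟨?_, ?_⟩
  · simp only [Finset.forall_mem_image]
    exact fun l _ => ⟨(interval_mem_unit l).1, interval_lt l, (interval_mem_unit l).2⟩
  · simp only [Finset.forall_mem_image]
    intro s hs t ht hst
    have hst' : ¬ s <+: t := fun h => hst (by rw [hS s hs t ht h])
    have hts' : ¬ t <+: s := fun h => hst (by rw [hS t ht s hs h])
    refine Set.disjoint_left.2 fun x hxs hxt => ?_
    rcases interval_separated hst' hts' with h | h
    · linarith [hxs.2, hxt.1]
    · linarith [hxs.1, hxt.2]

end Cantor

namespace UniversalEmbedding

variable {P : Type*} [PartialOrder P] (e : P → ℕ)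

open Classical in
noncomputable def code (a : P) (c : ℕ) : List Bool :=
  (List.range (c + 1)).map fun n => decide (∃ x, e x = n ∧ a ≤ x)

def codeSet (p : P) : Set (List Bool) :=
  {s | ∃ a b c, b ∈ Set.Icc a p ∧ c ∈ Set.Icc (e b) (e p) ∧ code e a c = s}

theorem code_prefix_code (a : P) {c c' : ℕ} (h : c ≤ c') : code e a c <+: code e a c' := by
  obtain ⟨k, rfl⟩ := Nat.exists_eq_add_of_le h
  have hrange : List.range (c + 1) <+: List.range (c + 1 + k) := by
    rw [List.range_add (n := c + 1)]; exact List.prefix_append _ _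
  rw [code, code, show c + k + 1 = c + 1 + k by omega]
  exact hrange.map _

theorem exists_eq_and_le_of_code_prefix {a a' : P} {c c' : ℕ}
    (h : code e a c <+: code e a' c') {b : P} (hab : a ≤ b) (hbc : e b ≤ c) : ∃ x, e x = e b ∧ a' ≤ x := by
  have hlt : e b < (code e a c).length := by simp [code]; omega
  have := h.getElem hlt
  simp only [code, List.getElem_map, List.getElem_range, decide_eq_decide] at this
  exact this.1 ⟨b, rfl, hab⟩

theorem codeSet_finite (p : P) : (codeSet e p).Finite :=
  (List.finite_length_le Bool (e p + 1)).subset <| by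
    rintro _ ⟨a, b, c, -, hc, rfl⟩
    simp [code, hc.2]

noncomputable def codes (p : P) : Finset (List Bool) := (codeSet_finite e p).toFinset

theorem mem_codes {p : P} {s : List Bool} : s ∈ codes e p ↔ s ∈ codeSet e p :=
  Set.Finite.mem_toFinset _

theorem prefixDominated_codes_of_le {p q : P} (hpq : p ≤ q) :
    PrefixDominated (codes e p) (codes e q) := by
  intro s hs
  obtain ⟨a, b, c, ⟨hab, hbp⟩, ⟨hbc, -⟩, rfl⟩ := (mem_codes e).1 hs
  by_cases hcq : c ≤ e q
  · exact ⟨code e a c, (mem_codes e).2 ⟨a, b, c, ⟨hab, hbp.trans hpq⟩, ⟨hbc, hcq⟩, rfl⟩,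
      List.prefix_refl _⟩
  · exact ⟨code e a (e q), (mem_codes e).2 ⟨a, q, e q, ⟨hab.trans (hbp.trans hpq), le_rfl⟩,
      ⟨le_rfl, le_rfl⟩, rfl⟩, code_prefix_code e a (by omega)⟩

theorem le_of_prefixDominated_codes (he : Function.Injective e) {p q : P}
    (h : PrefixDominated (codes e p) (codes e q)) : p ≤ q := by
  obtain ⟨t, ht, htp⟩ :=
    h (code e p (e p)) ((mem_codes e).2 ⟨p, p, e p, ⟨le_rfl, le_rfl⟩, ⟨le_rfl, le_rfl⟩, rfl⟩)
  obtain ⟨a, b, c, ⟨hab, hbq⟩, ⟨hbc, -⟩, rfl⟩ := (mem_codes e).1 ht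
  obtain ⟨x, hxb, hpx⟩ := exists_eq_and_le_of_code_prefix e htp hab hbc
  exact (he hxb ▸ hpx).trans hbq

noncomputable def intervalCode (p : P) : Finset (ℚ × ℚ) :=
  (prefixMinimals (codes e p)).image Cantor.interval

theorem isIntervalSet_intervalCode (p : P) : IsIntervalSet (intervalCode e p) :=
  Cantor.isIntervalSet_image_interval fun _ hs _ ht => eq_of_mem_prefixMinimals hs ht

theorem le_iff_ile_intervalCode (he : Function.Injective e) (p q : P) :
    p ≤ q ↔ Ile (intervalCode e p) (intervalCode e q) := by
  rw [intervalCode, intervalCode, Cantor.ile_image_interval_iff,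
    prefixDominated_prefixMinimals_iff]
  exact ⟨prefixDominated_codes_of_le e, le_of_prefixDominated_codes e he⟩

end UniversalEmbedding

/-- `(ℐ, ≤)` is a partial order (reflexive, transitive and antisymmetric on interval
sets) and is universal for countable partial orders. -/
theorem I_partialOrder_and_universal :
    (∀ A : Finset (ℚ × ℚ), IsIntervalSet A → Ile A A) ∧
    (∀ A B C : Finset (ℚ × ℚ), IsIntervalSet A → IsIntervalSet B → IsIntervalSet C →
      Ile A B → Ile B C → Ile A C) ∧
    (∀ A B : Finset (ℚ × ℚ), IsIntervalSet A → IsIntervalSet B →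
      Ile A B → Ile B A → A = B) ∧
    (∀ (P : Type) [Countable P] [PartialOrder P],
      ∃ f : P → Finset (ℚ × ℚ), (∀ p, IsIntervalSet (f p)) ∧
        ∀ p q : P, p ≤ q ↔ Ile (f p) (f q)) := by
  refine ⟨fun A _ => ile_refl A, fun _ _ _ _ _ _ => ile_trans,
    fun A B hA hB hAB hBA => (hA.subset_of_ile hAB hBA).antisymm (hB.subset_of_ile hBA hAB),
    fun P _ _ => ?_⟩
  obtain ⟨e, he⟩ := Countable.exists_injective_nat P
  exact ⟨UniversalEmbedding.intervalCode e, UniversalEmbedding.isIntervalSet_intervalCode e,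
    UniversalEmbedding.le_iff_ile_intervalCode e he⟩
end

section
/- The partial order (ℐ, ≤) is dense (has no gaps): for all A, B ∈ ℐ with A ≤ B and A ≠ B there exists C ∈ ℐ with A ≤ C, A ≠ C, C ≤ B and C ≠ B. -/
open Set

section GapInInterval

variable {α : Type*} [LinearOrder α]

lemma Icc_disjoint_Icc_iff {a b c d : α} (hab : a ≤ b) (hcd : c ≤ d) :
    Disjoint (Icc a b) (Icc c d) ↔ b < c ∨ d < a := by
  constructor
  · intro h
    by_contra! hle
    exact Set.disjoint_left.1 h (show max a c ∈ Icc a b from ⟨le_max_left _ _, max_le hab hle.1⟩)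
      ⟨le_max_right _ _, max_le hle.2 hcd⟩
  · intro h
    rw [Set.disjoint_left]
    rintro x ⟨hax, hxb⟩ ⟨hcx, hxd⟩
    rcases h with h | h <;> order

variable [DenselyOrdered α]

lemma exists_Icc_gap_below {c e : α} (hce : c < e) (S : Finset (α × α))
    (hS : ∀ p ∈ S, p.2 < e ∨ e ≤ p.1) :
    ∃ u v, c < u ∧ u < v ∧ v < e ∧ ∀ p ∈ S, Disjoint (Icc u v) (Icc p.1 p.2) := by
  -- the gap is placed between `e` and the last right endpoint `m` before it (or `c`)
  set T := insert c ((S.filter (·.2 < e)).image Prod.snd)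
  set m := T.max' (Finset.insert_nonempty _ _)
  have hme : m < e := by
    simpa [T, m, Finset.max'_lt_iff] using hce
  have hTm : ∀ p ∈ S, p.2 < e → p.2 ≤ m := fun p hp hpe =>
    T.le_max' _ (Finset.mem_insert_of_mem (Finset.mem_image_of_mem _ (by simp [hp, hpe])))
  obtain ⟨u, hmu, hue⟩ := exists_between hme
  obtain ⟨v, huv, hve⟩ := exists_between hue
  refine ⟨u, v, (T.le_max' c (Finset.mem_insert_self _ _)).trans_lt hmu, huv, hve,
    fun p hp => ?_⟩
  rw [disjoint_comm]
  refine Set.disjoint_left.2 fun x ⟨hpx, hxp⟩ ⟨hux, hxv⟩ => ?_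
  rcases hS p hp with h | h
  · have := hTm p hp h
    order
  · order

lemma exists_Icc_gap {c d : α} (hcd : c < d) (S : Finset (α × α))
    (hS : ∀ p ∈ S, c ≤ p.1 ∧ p.1 ≤ p.2 ∧ p.2 ≤ d) (hcdS : (c, d) ∉ S)
    (hdisj : ∀ p ∈ S, ∀ q ∈ S, p ≠ q → Disjoint (Icc p.1 p.2) (Icc q.1 q.2)) :
    ∃ u v, c < u ∧ u < v ∧ v ≤ d ∧ ∀ p ∈ S, Disjoint (Icc u v) (Icc p.1 p.2) := by
  by_cases hend : ∃ p ∈ S, p.2 = d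
  · -- the interval `p` reaching `d` starts after `c`, and every other interval ends before it
    obtain ⟨p, hpS, hpd⟩ := hend
    obtain ⟨hcle, hp, -⟩ := hS p hpS
    have hcp : c < p.1 := hcle.lt_of_ne fun h => hcdS (by rwa [h, ← hpd])
    obtain ⟨u, v, hu, huv, hv, hgap⟩ := exists_Icc_gap_below hcp S fun q hq => by
      by_cases hqp : q = p
      · exact Or.inr (hqp ▸ le_rfl)
      · obtain ⟨-, hqq, hqd⟩ := hS q hq
        rcases (Icc_disjoint_Icc_iff hqq hp).1 (hdisj q hq p hpS hqp) with h | h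
        · exact Or.inl h
        · order
    exact ⟨u, v, hu, huv, (hv.trans_le hp).le.trans hpd.le, hgap⟩
  · push Not at hend
    obtain ⟨u, v, hu, huv, hv, hgap⟩ := exists_Icc_gap_below hcd S fun q hq =>
      Or.inl ((hS q hq).2.2.lt_of_ne (hend q hq))
    exact ⟨u, v, hu, huv, hv.le, hgap⟩

end GapInInterval

lemma ile_insert_self (A : Finset (ℚ × ℚ)) (x : ℚ × ℚ) : Ile A (insert x A) :=
  fun p hp => ⟨p, Finset.mem_insert_of_mem hp, le_rfl, le_rfl⟩

lemma Ile.insert_left {A B : Finset (ℚ × ℚ)} (hAB : Ile A B) {x q : ℚ × ℚ} (hq : q ∈ B)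
    (h1 : q.1 ≤ x.1) (h2 : x.2 ≤ q.2) : Ile (insert x A) B := by
  intro p hp
  rcases Finset.mem_insert.1 hp with rfl | hp
  · exact ⟨q, hq, h1, h2⟩
  · exact hAB p hp

namespace IsIntervalSet

variable {A B : Finset (ℚ × ℚ)}

lemma eq_of_le (hA : IsIntervalSet A) {p q : ℚ × ℚ} (hp : p ∈ A) (hq : q ∈ A)
    (h1 : q.1 ≤ p.1) (h2 : p.2 ≤ q.2) : p = q := by
  by_contra hpq
  have hp' := (hA.1 p hp).2.1
  have hq' := (hA.1 q hq).2.1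
  rcases (Icc_disjoint_Icc_iff hp'.le hq'.le).1 (hA.2 p hp q hq hpq) with h | h <;> order

lemma exists_mem_notMem_of_ile (hA : IsIntervalSet A) (hAB : Ile A B) (hne : A ≠ B) :
    ∃ q ∈ B, q ∉ A := by
  by_contra! hBA
  obtain ⟨p, hpA, hpB⟩ := Finset.not_subset.1 fun hAB' => hne (hAB'.antisymm hBA)
  obtain ⟨q, hqB, h1, h2⟩ := hAB p hpA
  exact hpB (hA.eq_of_le hpA (hBA q hqB) h1 h2 ▸ hqB)

lemma exists_gap (hA : IsIntervalSet A) (hB : IsIntervalSet B) (hAB : Ile A B)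
    {q : ℚ × ℚ} (hqB : q ∈ B) (hqA : q ∉ A) :
    ∃ u v, q.1 < u ∧ u < v ∧ v ≤ q.2 ∧ ∀ p ∈ A, Disjoint (Icc u v) (Icc p.1 p.2) := by
  set S := A.filter fun p => q.1 ≤ p.1 ∧ p.2 ≤ q.2
  obtain ⟨u, v, hu, huv, hv, hgap⟩ := exists_Icc_gap (hB.1 q hqB).2.1 S
    (fun p hp => by
      obtain ⟨hpA, h1, h2⟩ := Finset.mem_filter.1 hp
      exact ⟨h1, (hA.1 p hpA).2.1.le, h2⟩)
    (fun h => hqA (Finset.mem_filter.1 h).1)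
    (fun p hp p' hp' => hA.2 p (Finset.mem_filter.1 hp).1 p' (Finset.mem_filter.1 hp').1)
  refine ⟨u, v, hu, huv, hv, fun p hpA => ?_⟩
  by_cases hpq : q.1 ≤ p.1 ∧ p.2 ≤ q.2
  · exact hgap p (Finset.mem_filter.2 ⟨hpA, hpq⟩)
  · -- `p` lies in another interval `q'` of `B`, which misses `q`
    obtain ⟨q', hq'B, h1, h2⟩ := hAB p hpA
    have hqq' : q ≠ q' := by
      rintro rfl
      exact hpq ⟨h1, h2⟩
    exact (hB.2 q hqB q' hq'B hqq').mono (Icc_subset_Icc hu.le hv) (Icc_subset_Icc h1 h2)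

lemma insert (hA : IsIntervalSet A) {u v : ℚ} (hu : 0 ≤ u) (huv : u < v) (hv : v ≤ 1)
    (hdisj : ∀ p ∈ A, Disjoint (Icc u v) (Icc p.1 p.2)) : IsIntervalSet (insert (u, v) A) := by
  refine ⟨fun p hp => ?_, fun p hp p' hp' hpp' => ?_⟩
  · rcases Finset.mem_insert.1 hp with rfl | hp
    · exact ⟨hu, huv, hv⟩
    · exact hA.1 p hp
  · rcases Finset.mem_insert.1 hp with rfl | hp <;> rcases Finset.mem_insert.1 hp' with rfl | hp'
    · exact absurd rfl hpp'
    · exact hdisj p' hp'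
    · exact (hdisj p hp).symm
    · exact hA.2 p hp p' hp' hpp'

end IsIntervalSet

/-- The partial order `(ℐ, ≤)` is dense: it has no gaps. -/
theorem I_dense (A B : Finset (ℚ × ℚ)) (hA : IsIntervalSet A) (hB : IsIntervalSet B)
    (hAB : Ile A B) (hne : A ≠ B) :
    ∃ C : Finset (ℚ × ℚ), IsIntervalSet C ∧ Ile A C ∧ A ≠ C ∧ Ile C B ∧ C ≠ B := by
  obtain ⟨q, hqB, hqA⟩ := hA.exists_mem_notMem_of_ile hAB hne
  obtain ⟨u, v, hu, huv, hv, hdisj⟩ := hA.exists_gap hB hAB hqB hqA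
  obtain ⟨hq0, -, hq1⟩ := hB.1 q hqB
  have huvA : (u, v) ∉ A := fun h => by
    rcases (Icc_disjoint_Icc_iff huv.le huv.le).1 (hdisj _ h) with h | h <;> order
  refine ⟨insert (u, v) A, hA.insert (hq0.trans hu.le) huv (hv.trans hq1) hdisj,
    ile_insert_self A _, fun h => huvA (h ▸ Finset.mem_insert_self _ _),
    hAB.insert_left hqB hu.le hv, fun h => ?_⟩
  rcases Finset.mem_insert.1 (h ▸ hqB) with rfl | hqA'
  · exact lt_irrefl _ hu
  · exact hqA hqA'
end

section
/- Let 𝒪 be the set of polynomials with rational coefficients, preordered by: p ≼ q iff p.eval x ≤ q.eval x for every rational x with 0 < x < 1. Then this order is universal: for every partial order P on a countable type there is a map f : P → Polynomial ℚ such that p ≤ q if and only if f p ≼ f q. -/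
/-!
Extend finite partial embeddings one element at a time, maintaining two invariants for the
polynomials `g a` placed so far: `a < b` forces `g a < g b` on all of `[0, 1]`, and whenever
no element of a finite set `A` lies below an element of a finite set `B`, some point of
`(0, 1)` sees every `g a` (`a ∈ A`) strictly above every `g b` (`b ∈ B`). A new element `c`
must lie strictly between the polynomials of the elements below and above it, and be high
or low at finitely many points supplied by the second invariant for the old elements. A
continuous function with these strict properties exists by patching local constants with a
partition of unity, and Weierstrass approximation turns it into a rational polynomial. The
embedding is read off an ideal of partial embeddings that meets, for every element, the
cofinal set of partial embeddings defined there.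
-/

open Polynomial Set Filter Topology

theorem Polynomial.aeval_ratCast {K : Type*} [DivisionRing K] [CharZero K] (p : ℚ[X]) (x : ℚ) :
    aeval (x : K) p = ((p.eval x : ℚ) : K) :=
  aeval_algebraMap_apply_eq_algebraMap_eval x p

theorem exists_ratPolynomial_near_polynomial (p : ℝ[X]) {ε : ℝ} (hε : 0 < ε) :
    ∃ q : ℚ[X], ∀ x ∈ Icc (0 : ℝ) 1, |aeval x q - p.eval x| < ε := by
  set N := p.natDegree + 1
  have hN : (0 : ℝ) < N := by positivity
  have hr : ∀ k, ∃ r : ℚ, |(r : ℝ) - p.coeff k| < ε / N := fun k => by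
    obtain ⟨r, hr₁, hr₂⟩ := exists_rat_btwn (sub_lt_self (p.coeff k) (div_pos hε hN))
    exact ⟨r, abs_sub_lt_iff.2 ⟨by linarith, by linarith⟩⟩
  choose r hr using hr
  refine ⟨∑ k ∈ Finset.range N, C (r k) * X ^ k, fun x hx => ?_⟩
  have hxk : ∀ k, |x ^ k| ≤ 1 := fun k => by
    rw [abs_of_nonneg (pow_nonneg hx.1 k)]
    exact pow_le_one₀ hx.1 hx.2
  calc |aeval x (∑ k ∈ Finset.range N, C (r k) * X ^ k) - p.eval x|
      = |∑ k ∈ Finset.range N, ((r k : ℝ) - p.coeff k) * x ^ k| := by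
        simp [eval_eq_sum_range, N, sub_mul, Finset.sum_sub_distrib]
    _ ≤ ∑ k ∈ Finset.range N, |((r k : ℝ) - p.coeff k) * x ^ k| := Finset.abs_sum_le_sum_abs _ _
    _ < ∑ _k ∈ Finset.range N, ε / N := by
        refine Finset.sum_lt_sum_of_nonempty ⟨0, by simp [N]⟩ fun k _ => ?_
        rw [abs_mul]
        exact (mul_le_of_le_one_right (abs_nonneg _) (hxk k)).trans_lt (hr k)
    _ = ε := by rw [Finset.sum_const, Finset.card_range, nsmul_eq_mul]; field_simp

theorem exists_ratPolynomial_near_of_continuousOn {f : ℝ → ℝ} (hf : ContinuousOn f (Icc 0 1))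
    {ε : ℝ} (hε : 0 < ε) : ∃ q : ℚ[X], ∀ x ∈ Icc (0 : ℝ) 1, |aeval x q - f x| < ε := by
  obtain ⟨p, hp⟩ := exists_polynomial_near_of_continuousOn 0 1 f hf (ε / 2) (half_pos hε)
  obtain ⟨q, hq⟩ := exists_ratPolynomial_near_polynomial p (half_pos hε)
  refine ⟨q, fun x hx => ?_⟩
  calc |aeval x q - f x| ≤ |aeval x q - p.eval x| + |p.eval x - f x| := abs_sub_le _ _ _
    _ < ε / 2 + ε / 2 := add_lt_add (hq x hx) (hp x hx)
    _ = ε := add_halves ε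

section Between

variable {X : Type*} [TopologicalSpace X]

theorem IsClosed.eventually_imp_lt {K : Set X} (hK : IsClosed K) {f g : X → ℝ} {x : X}
    (hf : ContinuousAt f x) (hg : ContinuousAt g x) (h : x ∈ K → f x < g x) :
    ∀ᶠ y in 𝓝 x, y ∈ K → f y < g y := by
  by_cases hx : x ∈ K
  · exact (hf.eventually_lt hg (h hx)).mono fun _ hy _ => hy
  · exact (hK.isOpen_compl.eventually_mem hx).mono fun _ hy hyK => absurd hyK hy

theorem IsCompact.eventually_forall_add_lt {K : Set X} (hK : IsCompact K) {f g : X → ℝ}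
    (hf : Continuous f) (hg : Continuous g) (h : ∀ x ∈ K, f x < g x) :
    ∀ᶠ ε in 𝓝 (0 : ℝ), ∀ x ∈ K, f x + ε < g x :=
  hK.eventually_forall_of_forall_eventually fun x hx =>
    ((hf.comp continuous_snd).add continuous_fst).continuousAt.eventually_lt
      (hg.comp continuous_snd).continuousAt (by simpa using h x hx)

theorem exists_continuous_between [NormalSpace X] [ParacompactSpace X] {ι κ : Type*}
    (I : Finset ι) (J : Finset κ) {f : ι → X → ℝ} {g : κ → X → ℝ} {K : ι → Set X}
    {L : κ → Set X} (hf : ∀ i ∈ I, Continuous (f i)) (hg : ∀ j ∈ J, Continuous (g j))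
    (hK : ∀ i ∈ I, IsClosed (K i)) (hL : ∀ j ∈ J, IsClosed (L j))
    (hfg : ∀ i ∈ I, ∀ j ∈ J, ∀ x ∈ K i ∩ L j, f i x < g j x) :
    ∃ φ : C(X, ℝ), (∀ i ∈ I, ∀ x ∈ K i, f i x < φ x) ∧ ∀ j ∈ J, ∀ x ∈ L j, φ x < g j x := by
  classical
  set t : X → Set ℝ := fun x =>
    {v | (∀ i ∈ I, x ∈ K i → f i x < v) ∧ ∀ j ∈ J, x ∈ L j → v < g j x}
  have ht : ∀ x, Convex ℝ (t x) := fun x => OrdConnected.convex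
    ⟨fun v hv w hw u hu => ⟨fun i hi hx => (hv.1 i hi hx).trans_le hu.1,
      fun j hj hx => hu.2.trans_lt (hw.2 j hj hx)⟩⟩
  obtain ⟨φ, hφ⟩ := exists_continuous_forall_mem_convex_of_local_const ht fun x => by
    obtain ⟨v, hfv, hvg⟩ := Finset.exists_between'
      ((I.filter (x ∈ K ·)).image (f · x)) ((J.filter (x ∈ L ·)).image (g · x))
      (by simp only [Finset.mem_image, Finset.mem_filter]
          rintro _ ⟨i, ⟨hi, hxi⟩, rfl⟩ _ ⟨j, ⟨hj, hxj⟩, rfl⟩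
          exact hfg i hi j hj x ⟨hxi, hxj⟩)
    refine ⟨v, (eventually_all_finset _).2 (fun i hi => ?_) |>.and
      ((eventually_all_finset _).2 fun j hj => ?_)⟩
    · exact (hK i hi).eventually_imp_lt (hf i hi).continuousAt continuousAt_const
        fun hx => hfv _ (Finset.mem_image_of_mem _ (Finset.mem_filter.2 ⟨hi, hx⟩))
    · exact (hL j hj).eventually_imp_lt continuousAt_const (hg j hj).continuousAt
        fun hx => hvg _ (Finset.mem_image_of_mem _ (Finset.mem_filter.2 ⟨hj, hx⟩))
  exact ⟨φ, fun i hi x hx => (hφ x).1 i hi hx, fun j hj x hx => (hφ x).2 j hj hx⟩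

end Between

theorem exists_ratPolynomial_between {ι κ : Type*} (I : Finset ι) (J : Finset κ)
    {f : ι → ℚ[X]} {g : κ → ℚ[X]} {K : ι → Set ℝ} {L : κ → Set ℝ}
    (hK : ∀ i ∈ I, IsClosed (K i) ∧ K i ⊆ Icc 0 1) (hL : ∀ j ∈ J, IsClosed (L j) ∧ L j ⊆ Icc 0 1)
    (hfg : ∀ i ∈ I, ∀ j ∈ J, ∀ x ∈ K i ∩ L j, aeval x (f i) < aeval x (g j)) :
    ∃ h : ℚ[X], (∀ i ∈ I, ∀ x ∈ K i, aeval x (f i) < aeval x h) ∧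
      ∀ j ∈ J, ∀ x ∈ L j, aeval x h < aeval x (g j) := by
  obtain ⟨φ, hfφ, hφg⟩ := exists_continuous_between I J
    (fun i _ => Polynomial.continuous_aeval (f i)) (fun j _ => Polynomial.continuous_aeval (g j))
    (fun i hi => (hK i hi).1) (fun j hj => (hL j hj).1) hfg
  have compact : ∀ M : Set ℝ, IsClosed M ∧ M ⊆ Icc 0 1 → IsCompact M := fun M hM =>
    isCompact_Icc.of_isClosed_subset hM.1 hM.2
  obtain ⟨ε, hε, hfε, hεg⟩ := Eventually.exists_gt <|
    ((eventually_all_finset I).2 fun i hi =>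
      (compact _ (hK i hi)).eventually_forall_add_lt (Polynomial.continuous_aeval (f i))
        φ.continuous (hfφ i hi)).and
    ((eventually_all_finset J).2 fun j hj =>
      (compact _ (hL j hj)).eventually_forall_add_lt φ.continuous
        (Polynomial.continuous_aeval (g j)) (hφg j hj))
  obtain ⟨h, hh⟩ := exists_ratPolynomial_near_of_continuousOn φ.continuous.continuousOn hε
  refine ⟨h, fun i hi x hx => ?_, fun j hj x hx => ?_⟩
  · linarith [(abs_lt.1 (hh x ((hK i hi).2 hx))).1, hfε i hi x hx]
  · linarith [(abs_lt.1 (hh x ((hL j hj).2 hx))).2, hεg j hj x hx]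

/-- The separation point is required for whole finite sets `A`, `B` rather than for pairs:
this is what makes the one-point extension `exists_isExtension` possible. -/
structure PartialPolyEmbedding (α : Type*) [PartialOrder α] where
  dom : Finset α
  poly : α → ℚ[X]
  lt : ∀ a ∈ dom, ∀ b ∈ dom, a < b → ∀ x ∈ Icc (0 : ℝ) 1, aeval x (poly a) < aeval x (poly b)
  sep : ∀ A ⊆ dom, ∀ B ⊆ dom, (∀ a ∈ A, ∀ b ∈ B, ¬a ≤ b) →
    ∃ x ∈ Ioo (0 : ℝ) 1, ∀ a ∈ A, ∀ b ∈ B, aeval x (poly b) < aeval x (poly a)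

namespace PartialPolyEmbedding

variable {α : Type*} [PartialOrder α]

instance : Preorder (PartialPolyEmbedding α) where
  le s t := s.dom ⊆ t.dom ∧ ∀ a ∈ s.dom, s.poly a = t.poly a
  le_refl s := ⟨subset_rfl, fun _ _ => rfl⟩
  le_trans s t u hst htu :=
    ⟨hst.1.trans htu.1, fun a ha => (hst.2 a ha).trans (htu.2 a (hst.1 ha))⟩

noncomputable instance : Inhabited (PartialPolyEmbedding α) :=
  ⟨{ dom := ∅
     poly := 0
     lt := by simp
     sep := fun A hA _ _ _ => ⟨1 / 2, by norm_num, by simp [Finset.subset_empty.1 hA]⟩ }⟩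

theorem exists_sep_mem_of_dense (s : PartialPolyEmbedding α) {D : Set ℝ} (hD : Dense D)
    {A B : Finset α} (hA : A ⊆ s.dom) (hB : B ⊆ s.dom) (hAB : ∀ a ∈ A, ∀ b ∈ B, ¬a ≤ b) :
    ∃ x ∈ D, x ∈ Ioo (0 : ℝ) 1 ∧ ∀ a ∈ A, ∀ b ∈ B, aeval x (s.poly b) < aeval x (s.poly a) := by
  have hopen : IsOpen (Ioo (0 : ℝ) 1 ∩
      {x | ∀ a ∈ A, ∀ b ∈ B, aeval x (s.poly b) < aeval x (s.poly a)}) := by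
    simp only [ofPred_forall]
    exact isOpen_Ioo.inter <| isOpen_biInter_finset fun a _ => isOpen_biInter_finset fun b _ =>
      isOpen_lt (Polynomial.continuous_aeval _) (Polynomial.continuous_aeval _)
  obtain ⟨x, hx, hxAB⟩ := s.sep A hA B hB hAB
  obtain ⟨y, hyD, hy, hyAB⟩ := hD.exists_mem_open hopen ⟨x, hx, hxAB⟩
  exact ⟨y, hyD, hy, hyAB⟩

/-- A new polynomial will be forced high at the points `xHigh B` and low at the points `xLow A`;
taking the former rational and the latter irrational keeps them apart. -/
theorem exists_sep_points (s : PartialPolyEmbedding α) :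
    ∃ xHigh xLow : Finset α → ℝ, (∀ A ⊆ s.dom, ∀ B ⊆ s.dom, xHigh B ≠ xLow A) ∧
      (∀ B ⊆ s.dom, xHigh B ∈ Ioo (0 : ℝ) 1 ∧ ∀ a ∈ s.dom, (∀ b ∈ B, ¬a ≤ b) →
        ∀ b ∈ B, aeval (xHigh B) (s.poly b) < aeval (xHigh B) (s.poly a)) ∧
      (∀ A ⊆ s.dom, xLow A ∈ Ioo (0 : ℝ) 1 ∧ ∀ b ∈ s.dom, (∀ a ∈ A, ¬a ≤ b) →
        ∀ a ∈ A, aeval (xLow A) (s.poly b) < aeval (xLow A) (s.poly a)) := by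
  classical
  have high : ∀ B ⊆ s.dom, ∃ x ∈ range ((↑) : ℚ → ℝ), x ∈ Ioo (0 : ℝ) 1 ∧
      ∀ a ∈ s.dom.filter (fun a => ∀ b ∈ B, ¬a ≤ b), ∀ b ∈ B,
        aeval x (s.poly b) < aeval x (s.poly a) := fun B hB =>
    s.exists_sep_mem_of_dense Rat.denseRange_cast (Finset.filter_subset _ _) hB
      fun a ha => (Finset.mem_filter.1 ha).2
  have low : ∀ A ⊆ s.dom, ∃ x ∈ {x : ℝ | Irrational x}, x ∈ Ioo (0 : ℝ) 1 ∧
      ∀ a ∈ A, ∀ b ∈ s.dom.filter (fun b => ∀ a ∈ A, ¬a ≤ b),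
        aeval x (s.poly b) < aeval x (s.poly a) := fun A hA =>
    s.exists_sep_mem_of_dense dense_irrational hA (Finset.filter_subset _ _)
      fun a ha b hb => (Finset.mem_filter.1 hb).2 a ha
  choose! xHigh hxHigh_rat hxHigh hxHigh_sep using high
  choose! xLow hxLow_irrat hxLow hxLow_sep using low
  refine ⟨xHigh, xLow, fun A hA B hB heq => ?_, fun B hB => ⟨hxHigh B hB, fun a ha haB =>
    hxHigh_sep B hB a (Finset.mem_filter.2 ⟨ha, haB⟩)⟩, fun A hA => ⟨hxLow A hA,
    fun b hb hAb a haA => hxLow_sep A hA a haA b (Finset.mem_filter.2 ⟨hb, hAb⟩)⟩⟩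
  obtain ⟨q, hq⟩ := hxHigh_rat B hB
  exact Rat.not_irrational q (hq.trans heq ▸ hxLow_irrat A hA)

structure IsExtension (s : PartialPolyEmbedding α) (c : α) (h : ℚ[X]) : Prop where
  poly_lt : ∀ a ∈ s.dom, a < c → ∀ x ∈ Icc (0 : ℝ) 1, aeval x (s.poly a) < aeval x h
  lt_poly : ∀ b ∈ s.dom, c < b → ∀ x ∈ Icc (0 : ℝ) 1, aeval x h < aeval x (s.poly b)
  sep_left : ∀ A ⊆ s.dom, ∀ B ⊆ s.dom, (∀ b ∈ B, ¬c ≤ b) → (∀ a ∈ A, ∀ b ∈ B, ¬a ≤ b) →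
    ∃ x ∈ Ioo (0 : ℝ) 1, ∀ b ∈ B, aeval x (s.poly b) < aeval x h ∧
      ∀ a ∈ A, aeval x (s.poly b) < aeval x (s.poly a)
  sep_right : ∀ A ⊆ s.dom, ∀ B ⊆ s.dom, (∀ a ∈ A, ¬a ≤ c) → (∀ a ∈ A, ∀ b ∈ B, ¬a ≤ b) →
    ∃ x ∈ Ioo (0 : ℝ) 1, ∀ a ∈ A, aeval x h < aeval x (s.poly a) ∧
      ∀ b ∈ B, aeval x (s.poly b) < aeval x (s.poly a)

theorem exists_isExtension (s : PartialPolyEmbedding α) (c : α) : ∃ h, s.IsExtension c h := by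
  classical
  obtain ⟨xHigh, xLow, hne, hHigh, hLow⟩ := s.exists_sep_points
  set S := s.dom
  let lower : Finset (ℚ[X] × Set ℝ) :=
    (S.filter (· < c)).image (fun a => (s.poly a, Icc 0 1)) ∪
      (S.powerset.filter fun B => ∀ b ∈ B, ¬c ≤ b).biUnion
        fun B => B.image fun b => (s.poly b, {xHigh B})
  let upper : Finset (ℚ[X] × Set ℝ) :=
    (S.filter (c < ·)).image (fun b => (s.poly b, Icc 0 1)) ∪
      (S.powerset.filter fun A => ∀ a ∈ A, ¬a ≤ c).biUnion
        fun A => A.image fun a => (s.poly a, {xLow A})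
  have hlower : ∀ p ∈ lower, IsClosed p.2 ∧ p.2 ⊆ Icc 0 1 := by
    simp only [lower, Finset.mem_union, Finset.mem_image, Finset.mem_biUnion, Finset.mem_filter,
      Finset.mem_powerset]
    rintro _ (⟨a, -, rfl⟩ | ⟨B, ⟨hB, -⟩, b, -, rfl⟩)
    exacts [⟨isClosed_Icc, subset_rfl⟩,
      ⟨isClosed_singleton, singleton_subset_iff.2 (Ioo_subset_Icc_self (hHigh B hB).1)⟩]
  have hupper : ∀ q ∈ upper, IsClosed q.2 ∧ q.2 ⊆ Icc 0 1 := by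
    simp only [upper, Finset.mem_union, Finset.mem_image, Finset.mem_biUnion, Finset.mem_filter,
      Finset.mem_powerset]
    rintro _ (⟨a, -, rfl⟩ | ⟨A, ⟨hA, -⟩, a, -, rfl⟩)
    exacts [⟨isClosed_Icc, subset_rfl⟩,
      ⟨isClosed_singleton, singleton_subset_iff.2 (Ioo_subset_Icc_self (hLow A hA).1)⟩]
  have hlu : ∀ p ∈ lower, ∀ q ∈ upper, ∀ x ∈ p.2 ∩ q.2, aeval x p.1 < aeval x q.1 := by
    simp only [lower, upper, Finset.mem_union, Finset.mem_image, Finset.mem_biUnion,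
      Finset.mem_filter, Finset.mem_powerset]
    rintro _ (⟨l, ⟨hl, hlc⟩, rfl⟩ | ⟨B, ⟨hB, hcB⟩, b, hb, rfl⟩)
      _ (⟨u, ⟨hu, hcu⟩, rfl⟩ | ⟨A, ⟨hA, hAc⟩, a, ha, rfl⟩) x ⟨hx₁, hx₂⟩
    · exact s.lt l hl u hu (hlc.trans hcu) x hx₁
    · rw [mem_singleton_iff.1 hx₂]
      exact (hLow A hA).2 l hl (fun a' ha' hal => hAc a' ha' (hal.trans hlc.le)) a ha
    · rw [mem_singleton_iff.1 hx₁]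
      exact (hHigh B hB).2 u hu (fun b' hb' hub => hcB b' hb' (hcu.le.trans hub)) b hb
    · exact absurd ((mem_singleton_iff.1 hx₁).symm.trans (mem_singleton_iff.1 hx₂)) (hne A hA B hB)
  obtain ⟨h, hlower_h, hh_upper⟩ := exists_ratPolynomial_between lower upper hlower hupper hlu
  refine ⟨h, ⟨fun a ha hac x hx => hlower_h (s.poly a, Icc 0 1) ?_ x hx,
    fun b hb hcb x hx => hh_upper (s.poly b, Icc 0 1) ?_ x hx, fun A hA B hB hcB hAB => ?_,
    fun A hA B hB hAc hAB => ?_⟩⟩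
  · exact Finset.mem_union_left _ (Finset.mem_image_of_mem _ (Finset.mem_filter.2 ⟨ha, hac⟩))
  · exact Finset.mem_union_left _ (Finset.mem_image_of_mem _ (Finset.mem_filter.2 ⟨hb, hcb⟩))
  · refine ⟨xHigh B, (hHigh B hB).1, fun b hb => ⟨hlower_h (s.poly b, {xHigh B}) ?_ _ rfl,
      fun a ha => (hHigh B hB).2 a (hA ha) (hAB a ha) b hb⟩⟩
    exact Finset.mem_union_right _ (Finset.mem_biUnion.2 ⟨B,
      Finset.mem_filter.2 ⟨Finset.mem_powerset.2 hB, hcB⟩, Finset.mem_image_of_mem _ hb⟩)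
  · refine ⟨xLow A, (hLow A hA).1, fun a ha => ⟨hh_upper (s.poly a, {xLow A}) ?_ _ rfl,
      fun b hb => (hLow A hA).2 b (hB hb) (fun a' ha' => hAB a' ha' b hb) a ha⟩⟩
    exact Finset.mem_union_right _ (Finset.mem_biUnion.2 ⟨A,
      Finset.mem_filter.2 ⟨Finset.mem_powerset.2 hA, hAc⟩, Finset.mem_image_of_mem _ ha⟩)

section Insert

variable [DecidableEq α] {s : PartialPolyEmbedding α} {c : α} {h : ℚ[X]}

theorem update_poly_apply (hc : c ∉ s.dom) {a : α} (ha : a ∈ s.dom) :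
    Function.update s.poly c h a = s.poly a :=
  Function.update_of_ne (ne_of_mem_of_not_mem ha hc) _ _

theorem IsExtension.lt_update (hh : s.IsExtension c h) (hc : c ∉ s.dom) :
    ∀ a ∈ insert c s.dom, ∀ b ∈ insert c s.dom, a < b → ∀ x ∈ Icc (0 : ℝ) 1,
      aeval x (Function.update s.poly c h a) < aeval x (Function.update s.poly c h b) := by
  intro a ha b hb hab x hx
  by_cases hac : a = c <;> by_cases hbc : b = c
  · exact absurd (hac.trans hbc.symm) hab.ne
  · subst hac
    have hb' := Finset.mem_of_mem_insert_of_ne hb hbc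
    rw [Function.update_self, update_poly_apply hc hb']
    exact hh.lt_poly b hb' hab x hx
  · subst hbc
    have ha' := Finset.mem_of_mem_insert_of_ne ha hac
    rw [Function.update_self, update_poly_apply hc ha']
    exact hh.poly_lt a ha' hab x hx
  · have ha' := Finset.mem_of_mem_insert_of_ne ha hac
    have hb' := Finset.mem_of_mem_insert_of_ne hb hbc
    rw [update_poly_apply hc ha', update_poly_apply hc hb']
    exact s.lt a ha' b hb' hab x hx

theorem IsExtension.sep_update (hh : s.IsExtension c h) (hc : c ∉ s.dom) :
    ∀ A ⊆ insert c s.dom, ∀ B ⊆ insert c s.dom, (∀ a ∈ A, ∀ b ∈ B, ¬a ≤ b) →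
      ∃ x ∈ Ioo (0 : ℝ) 1, ∀ a ∈ A, ∀ b ∈ B,
        aeval x (Function.update s.poly c h b) < aeval x (Function.update s.poly c h a) := by
  intro A hA B hB hAB
  by_cases hcA : c ∈ A
  · have hcB : c ∉ B := fun hcB => hAB c hcA c hcB le_rfl
    rw [Finset.subset_insert_iff] at hA
    rw [Finset.subset_insert_iff_of_notMem hcB] at hB
    obtain ⟨x, hx, hxB⟩ := hh.sep_left _ hA B hB (hAB c hcA)
      fun a ha => hAB a (Finset.mem_of_mem_erase ha)
    refine ⟨x, hx, fun a ha b hb => ?_⟩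
    rw [update_poly_apply hc (hB hb)]
    by_cases hac : a = c
    · rw [hac, Function.update_self]
      exact (hxB b hb).1
    · rw [update_poly_apply hc (hA (Finset.mem_erase.2 ⟨hac, ha⟩))]
      exact (hxB b hb).2 a (Finset.mem_erase.2 ⟨hac, ha⟩)
  rw [Finset.subset_insert_iff_of_notMem hcA] at hA
  by_cases hcB : c ∈ B
  · rw [Finset.subset_insert_iff] at hB
    obtain ⟨x, hx, hxA⟩ := hh.sep_right A hA _ hB (fun a ha => hAB a ha c hcB)
      fun a ha b hb => hAB a ha b (Finset.mem_of_mem_erase hb)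
    refine ⟨x, hx, fun a ha b hb => ?_⟩
    rw [update_poly_apply hc (hA ha)]
    by_cases hbc : b = c
    · rw [hbc, Function.update_self]
      exact (hxA a ha).1
    · rw [update_poly_apply hc (hB (Finset.mem_erase.2 ⟨hbc, hb⟩))]
      exact (hxA a ha).2 b (Finset.mem_erase.2 ⟨hbc, hb⟩)
  rw [Finset.subset_insert_iff_of_notMem hcB] at hB
  obtain ⟨x, hx, hxAB⟩ := s.sep A hA B hB hAB
  refine ⟨x, hx, fun a ha b hb => ?_⟩
  rw [update_poly_apply hc (hA ha), update_poly_apply hc (hB hb)]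
  exact hxAB a ha b hb

end Insert

theorem exists_mem_dom_le (s : PartialPolyEmbedding α) (c : α) :
    ∃ t : PartialPolyEmbedding α, c ∈ t.dom ∧ s ≤ t := by
  classical
  by_cases hc : c ∈ s.dom
  · exact ⟨s, hc, le_rfl⟩
  obtain ⟨h, hh⟩ := s.exists_isExtension c
  exact ⟨⟨insert c s.dom, Function.update s.poly c h, hh.lt_update hc, hh.sep_update hc⟩,
    Finset.mem_insert_self _ _, Finset.subset_insert _ _, fun a ha => (update_poly_apply hc ha).symm⟩

end PartialPolyEmbedding

theorem exists_ratPolynomial_embedding (α : Type*) [PartialOrder α] [Countable α] :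
    ∃ f : α → ℚ[X], (∀ a b, a < b → ∀ x ∈ Icc (0 : ℝ) 1, aeval x (f a) < aeval x (f b)) ∧
      ∀ a b, ¬a ≤ b → ∃ x : ℚ, 0 < x ∧ x < 1 ∧ (f b).eval x < (f a).eval x := by
  have := Encodable.ofCountable α
  let D : α → Order.Cofinal (PartialPolyEmbedding α) := fun a =>
    ⟨{s | a ∈ s.dom}, fun s => s.exists_mem_dom_le a⟩
  let I := Order.idealOfCofinals default D
  choose s hs_dom hs_I using Order.cofinal_meets_idealOfCofinals default D
  have common : ∀ a b, ∃ t : PartialPolyEmbedding α, a ∈ t.dom ∧ b ∈ t.dom ∧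
      (s a).poly a = t.poly a ∧ (s b).poly b = t.poly b := fun a b => by
    obtain ⟨t, -, hat, hbt⟩ := I.directed _ (hs_I a) _ (hs_I b)
    exact ⟨t, hat.1 (hs_dom a), hbt.1 (hs_dom b), hat.2 a (hs_dom a), hbt.2 b (hs_dom b)⟩
  refine ⟨fun a => (s a).poly a, fun a b hab x hx => ?_, fun a b hab => ?_⟩
  · obtain ⟨t, ha, hb, hta, htb⟩ := common a b
    dsimp only
    rw [hta, htb]
    exact t.lt a ha b hb hab x hx
  · obtain ⟨t, ha, hb, hta, htb⟩ := common a b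
    obtain ⟨x, ⟨q, rfl⟩, hq, hqab⟩ := t.exists_sep_mem_of_dense Rat.denseRange_cast
      (Finset.singleton_subset_iff.2 ha) (Finset.singleton_subset_iff.2 hb) (by simpa using hab)
    refine ⟨q, by exact_mod_cast hq.1, by exact_mod_cast hq.2, ?_⟩
    have := hqab a (Finset.mem_singleton_self a) b (Finset.mem_singleton_self b)
    rw [← hta, ← htb, aeval_ratCast, aeval_ratCast] at this
    exact_mod_cast this

/-- Polynomials with rational coefficients, ordered by pointwise comparison of values
on the open rational interval `(0, 1)`, form a universal order for countable partial
orders. -/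
theorem polynomials_universal (P : Type) [Countable P] [PartialOrder P] :
    ∃ f : P → Polynomial ℚ,
      ∀ p q : P, p ≤ q ↔ ∀ x : ℚ, 0 < x → x < 1 → (f p).eval x ≤ (f q).eval x := by
  obtain ⟨f, hlt, hsep⟩ := exists_ratPolynomial_embedding P
  refine ⟨f, fun p q => ⟨fun hpq x hx₀ hx₁ => ?_, fun h => ?_⟩⟩
  · rcases hpq.lt_or_eq with hpq | rfl
    · have := hlt p q hpq x ⟨by exact_mod_cast hx₀.le, by exact_mod_cast hx₁.le⟩
      rw [aeval_ratCast, aeval_ratCast] at this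
      exact_mod_cast this.le
    · exact le_rfl
  · by_contra hpq
    obtain ⟨x, hx₀, hx₁, hx⟩ := hsep p q hpq
    exact (h x hx₀ hx₁).not_gt hx
end

section
/- Let 𝒮 be the collection of subsets S of the integers ℤ such that S is 2^n-periodic for some natural number n, i.e., there exists n with x ∈ S ↔ x + 2^n ∈ S for all x ∈ ℤ. Then (𝒮, ⊆) is universal: for every partial order P on a countable type there is a map f : P → 𝒮 such that p ≤ q if and only if f p ⊆ f q. -/
/-!
Enumerate `P` as `u 0, u 1, …` and build the sets one at a time: `S n` is the union of the
earlier `S k` with `u k ≤ u n`, together with the part of the intersection of the earlier `S k`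
with `u n ≤ u k` whose binary digit of weight `2 ^ n` is `1`. Each `S k` is `2 ^ (k + 1)`-periodic,
so for `k < n` membership in `S k` is blind to that digit. Hence an integer separating `p ≰ q` on
the first `n` sets (in every set above `p`, in no set below `q`) can be moved inside its class
modulo `2 ^ n` so that it also separates them on `S n`. Such separating integers give
`S i ⊆ S j → u i ≤ u j`; the converse is immediate from the construction.
-/

namespace PeriodicSets

def IsPeriodic (c : ℤ) (A : Set ℤ) : Prop := ∀ ⦃x y : ℤ⦄, x ≡ y [ZMOD c] → (x ∈ A ↔ y ∈ A)

namespace IsPeriodic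

variable {c d : ℤ} {ι : Sort*}

theorem of_dvd {A : Set ℤ} (hcd : c ∣ d) (h : IsPeriodic c A) : IsPeriodic d A :=
  fun _ _ hxy => h (hxy.of_dvd hcd)

theorem iUnion {A : ι → Set ℤ} (h : ∀ i, IsPeriodic c (A i)) : IsPeriodic c (⋃ i, A i) :=
  fun _ _ hxy => by simp only [Set.mem_iUnion]; exact exists_congr fun i => h i hxy

theorem iInter {A : ι → Set ℤ} (h : ∀ i, IsPeriodic c (A i)) : IsPeriodic c (⋂ i, A i) :=
  fun _ _ hxy => by simp only [Set.mem_iInter]; exact forall_congr' fun i => h i hxy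

theorem union {A B : Set ℤ} (hA : IsPeriodic c A) (hB : IsPeriodic c B) :
    IsPeriodic c (A ∪ B) :=
  fun _ _ hxy => or_congr (hA hxy) (hB hxy)

theorem inter {A B : Set ℤ} (hA : IsPeriodic c A) (hB : IsPeriodic c B) :
    IsPeriodic c (A ∩ B) :=
  fun _ _ hxy => and_congr (hA hxy) (hB hxy)

theorem mem_add_iff {A : Set ℤ} (h : IsPeriodic c A) (x : ℤ) : x ∈ A ↔ x + c ∈ A :=
  h Int.add_modEq_right.symm

end IsPeriodic

def bitSet (n : ℕ) : Set ℤ := {x | Odd (x / 2 ^ n)}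

theorem add_mul_mem_bitSet_iff (n : ℕ) (x k : ℤ) :
    x + 2 ^ n * k ∈ bitSet n ↔ (x ∈ bitSet n ↔ Even k) := by
  have h2n : (2 : ℤ) ^ n ≠ 0 := by positivity
  simp only [bitSet, Set.mem_ofPred_eq, Int.add_mul_ediv_left x k h2n, Int.odd_add]

theorem isPeriodic_bitSet (n : ℕ) : IsPeriodic (2 ^ (n + 1)) (bitSet n) := by
  intro x y hxy
  obtain ⟨k, hk⟩ := Int.modEq_iff_dvd.1 hxy
  have hy : y = x + 2 ^ n * (2 * k) := by rw [pow_succ] at hk; linarith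
  simp [hy, add_mul_mem_bitSet_iff]

theorem exists_modEq_mem_bitSet_iff (n : ℕ) (x : ℤ) (b : Prop) :
    ∃ y, y ≡ x [ZMOD 2 ^ n] ∧ (y ∈ bitSet n ↔ b) := by
  by_cases hx : x ∈ bitSet n ↔ b
  · exact ⟨x, Int.ModEq.refl x, hx⟩
  · refine ⟨x + 2 ^ n, Int.add_modEq_right, ?_⟩
    have := add_mul_mem_bitSet_iff n x 1
    rw [mul_one] at this
    simp only [this, Int.not_even_one, iff_false]
    tauto

section Construction

variable {P : Type*} [Preorder P] (u : ℕ → P)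

def embedding : ℕ → Set ℤ
  | n => (⋃ (k : Fin n) (_ : u k ≤ u n), embedding k) ∪
      ((⋂ (k : Fin n) (_ : u n ≤ u k), embedding k) ∩ bitSet n)
termination_by n => n
decreasing_by all_goals exact k.isLt

theorem mem_embedding {n : ℕ} {x : ℤ} :
    x ∈ embedding u n ↔ (∃ k < n, u k ≤ u n ∧ x ∈ embedding u k) ∨
      ((∀ k < n, u n ≤ u k → x ∈ embedding u k) ∧ x ∈ bitSet n) := by
  rw [embedding]
  simp only [Set.mem_union, Set.mem_iUnion, Set.mem_inter_iff, Set.mem_iInter, Fin.exists_iff,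
    Fin.forall_iff, exists_prop, and_left_comm]

theorem isPeriodic_embedding (n : ℕ) : IsPeriodic (2 ^ (n + 1)) (embedding u n) := by
  induction n using Nat.strong_induction_on with
  | _ n ih =>
    have hk (k : Fin n) : IsPeriodic (2 ^ (n + 1)) (embedding u k) :=
      (ih k k.isLt).of_dvd (pow_dvd_pow 2 (by omega))
    rw [embedding]
    exact (IsPeriodic.iUnion fun k => .iUnion fun _ => hk k).union
      ((IsPeriodic.iInter fun k => .iInter fun _ => hk k).inter (isPeriodic_bitSet n))

theorem embedding_mono {i j : ℕ} (h : u i ≤ u j) : embedding u i ⊆ embedding u j := by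
  induction i using Nat.strong_induction_on generalizing j with
  | _ i ih =>
    rcases lt_trichotomy i j with hij | rfl | hji
    · intro x hx
      exact (mem_embedding u).2 (.inl ⟨i, hij, h, hx⟩)
    · rfl
    · intro x hx
      rcases (mem_embedding u).1 hx with ⟨k, hki, hk, hxk⟩ | ⟨hx, -⟩
      · exact ih k hki (hk.trans h) hxk
      · exact hx j hji h

theorem exists_separating (n : ℕ) {p q : P} (hpq : ¬p ≤ q) :
    ∃ x, ∀ k < n, (p ≤ u k → x ∈ embedding u k) ∧ (u k ≤ q → x ∉ embedding u k) := by
  induction n with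
  | zero => exact ⟨0, by simp⟩
  | succ n ih =>
    obtain ⟨x, hx⟩ := ih
    obtain ⟨y, hyx, hy⟩ := exists_modEq_mem_bitSet_iff n x (p ≤ u n)
    have hmem {k : ℕ} (hk : k < n) : y ∈ embedding u k ↔ x ∈ embedding u k :=
      (isPeriodic_embedding u k).of_dvd (pow_dvd_pow 2 hk) hyx
    refine ⟨y, fun k hk => ?_⟩
    rcases Nat.lt_succ_iff_lt_or_eq.1 hk with hk | rfl
    · simpa only [hmem hk] using hx k hk
    refine ⟨fun hpk => (mem_embedding u).2 (.inr ⟨fun j hj hkj => ?_, hy.2 hpk⟩), fun hkq => ?_⟩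
    · exact (hmem hj).2 ((hx j hj).1 (hpk.trans hkj))
    · rw [mem_embedding]
      rintro (⟨j, hj, hjk, hyj⟩ | ⟨-, hyk⟩)
      · exact (hx j hj).2 (hjk.trans hkq) ((hmem hj).1 hyj)
      · exact hpq ((hy.1 hyk).trans hkq)

theorem le_iff_embedding_subset (i j : ℕ) : u i ≤ u j ↔ embedding u i ⊆ embedding u j := by
  refine ⟨embedding_mono u, fun hsub => ?_⟩
  by_contra hij
  obtain ⟨x, hx⟩ := exists_separating u (i + j + 1) hij
  exact (hx j (by omega)).2 le_rfl (hsub ((hx i (by omega)).1 le_rfl))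

end Construction

end PeriodicSets

/-- The collection of subsets of `ℤ` that are `2 ^ n`-periodic for some `n`, ordered by
inclusion, is universal for countable partial orders. -/
theorem periodicSets_universal (P : Type) [Countable P] [PartialOrder P] :
    ∃ f : P → Set ℤ,
      (∀ p, ∃ n : ℕ, ∀ x : ℤ, x ∈ f p ↔ x + 2 ^ n ∈ f p) ∧
      ∀ p q : P, p ≤ q ↔ f p ⊆ f q := by
  rcases isEmpty_or_nonempty P with _ | _
  · exact ⟨fun _ => ∅, fun p => isEmptyElim p, fun p => isEmptyElim p⟩
  obtain ⟨u, hu⟩ := exists_surjective_nat P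
  refine ⟨fun p => PeriodicSets.embedding u (Function.surjInv hu p),
    fun p => ⟨_, (PeriodicSets.isPeriodic_embedding u _).mem_add_iff⟩, fun p q => ?_⟩
  conv_lhs => rw [← Function.surjInv_eq hu p, ← Function.surjInv_eq hu q]
  exact PeriodicSets.le_iff_embedding_subset u _ _
end

section
/- Let 𝒯𝒱 be the set of finite sets of 0–1 vectors (lists of Booleans), with the relation: for vectors v, v', v ≼ v' iff v is at least as long as v' and the i-th entry of v is ≥ the i-th entry of v' for every i below the length of v' (with false < true), and for finite sets V, V' of vectors, V ≤ V' iff for every v ∈ V there exists v' ∈ V' with v ≼ v'. Then the quasi-order (𝒯𝒱, ≤) contains a universal partial order: for every partial order P on a countable type there is a map f : P → 𝒯𝒱 such that p ≤ q if and only if f p ≤ f q. -/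
/-!
Enumerate `P` injectively by `e : P → ℕ` and code an element `r` by the vector of length
`e r + 1` whose entry at position `e s` is `true` exactly when `r ≤ s`. If `a ≤ b` and
`e b ≤ e a`, the code of `a` dominates that of `b`; conversely, the entry at position `e b`
shows that domination of the code of `b` forces `a ≤ b`. An element `q` is represented by the
finitely many codes of the `r ≤ q` with `e r ≤ e q`: the code of any `r ≤ p ≤ q` with
`e r > e q` is then dominated by the shorter code of `q` itself.
-/

/-- The truncated-vector order on 0–1 vectors: `v ≼ w` iff `v` is at least as long as
`w` and entrywise (with `false < true`) `v` dominates `w` below the length of `w`. -/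
def TVvecLe (v w : List Bool) : Prop :=
  w.length ≤ v.length ∧ ∀ i < w.length, w.getD i false ≤ v.getD i false

/-- The order on finite sets of 0–1 vectors: `V ≤ W` iff every vector of `V` is
dominated by some vector of `W`. -/
def TVle (V W : Finset (List Bool)) : Prop :=
  ∀ v ∈ V, ∃ w ∈ W, TVvecLe v w

open Classical in
noncomputable def upsetCode {P : Type*} [Preorder P] (e : P → ℕ) (r : P) : List Bool :=
  List.ofFn fun j : Fin (e r + 1) => decide (∃ s, e s = j ∧ r ≤ s)

noncomputable def upsetCodeSet {P : Type*} [Preorder P] {e : P → ℕ}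
    (he : Function.Injective e) (q : P) : Finset (List Bool) :=
  open Classical in
  (((Finset.Iic (e q)).preimage e he.injOn).filter (· ≤ q)).image (upsetCode e)

section

variable {P : Type*} [Preorder P] {e : P → ℕ}

lemma length_upsetCode (r : P) : (upsetCode e r).length = e r + 1 := by
  simp [upsetCode]

lemma getD_upsetCode_eq_true_iff {r : P} {j : ℕ} :
    (upsetCode e r).getD j false = true ↔ j ≤ e r ∧ ∃ s, e s = j ∧ r ≤ s := by
  by_cases hj : j ≤ e r
  · rw [List.getD_eq_getElem _ _ (by rw [length_upsetCode]; omega)]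
    simp only [upsetCode, List.getElem_ofFn, decide_eq_true_iff, hj, true_and]
  · rw [List.getD_eq_default _ _ (by rw [length_upsetCode]; omega)]
    simp [hj]

lemma tvVecLe_upsetCode {a b : P} (hab : a ≤ b) (heb : e b ≤ e a) :
    TVvecLe (upsetCode e a) (upsetCode e b) := by
  refine ⟨by simpa [length_upsetCode] using heb, fun i _ => Bool.le_iff_imp.2 ?_⟩
  simp only [getD_upsetCode_eq_true_iff]
  rintro ⟨hi, s, rfl, hbs⟩
  exact ⟨hi.trans heb, s, rfl, hab.trans hbs⟩

lemma le_of_tvVecLe_upsetCode (he : Function.Injective e) {a b : P}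
    (h : TVvecLe (upsetCode e a) (upsetCode e b)) : a ≤ b := by
  obtain ⟨hlen, hentries⟩ := h
  have hmark : (upsetCode e b).getD (e b) false = true :=
    getD_upsetCode_eq_true_iff.2 ⟨le_rfl, b, rfl, le_rfl⟩
  have hb : e b < (upsetCode e b).length := by rw [length_upsetCode]; omega
  obtain ⟨-, s, hs, has⟩ :=
    getD_upsetCode_eq_true_iff.1 (Bool.le_iff_imp.1 (hentries _ hb) hmark)
  exact he hs ▸ has

lemma mem_upsetCodeSet (he : Function.Injective e) {q : P} {v : List Bool} :
    v ∈ upsetCodeSet he q ↔ ∃ r, (e r ≤ e q ∧ r ≤ q) ∧ upsetCode e r = v := by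
  simp [upsetCodeSet]

lemma tvLe_upsetCodeSet (he : Function.Injective e) {p q : P} (hpq : p ≤ q) :
    TVle (upsetCodeSet he p) (upsetCodeSet he q) := by
  intro v hv
  obtain ⟨r, ⟨-, hrp⟩, rfl⟩ := (mem_upsetCodeSet he).1 hv
  have hrq := hrp.trans hpq
  rcases le_total (e r) (e q) with hr | hq
  · exact ⟨upsetCode e r, (mem_upsetCodeSet he).2 ⟨r, ⟨hr, hrq⟩, rfl⟩,
      tvVecLe_upsetCode le_rfl le_rfl⟩
  · exact ⟨upsetCode e q, (mem_upsetCodeSet he).2 ⟨q, ⟨le_rfl, le_rfl⟩, rfl⟩,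
      tvVecLe_upsetCode hrq hq⟩

lemma le_of_tvLe_upsetCodeSet (he : Function.Injective e) {p q : P}
    (h : TVle (upsetCodeSet he p) (upsetCodeSet he q)) : p ≤ q := by
  obtain ⟨w, hw, hpw⟩ := h _ ((mem_upsetCodeSet he).2 ⟨p, ⟨le_rfl, le_rfl⟩, rfl⟩)
  obtain ⟨r, ⟨-, hrq⟩, rfl⟩ := (mem_upsetCodeSet he).1 hw
  exact (le_of_tvVecLe_upsetCode he hpw).trans hrq

end

/-- The quasi-order of truncated vector-sets contains a universal partial order. -/
theorem truncatedVectors_universal (P : Type) [Countable P] [PartialOrder P] :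
    ∃ f : P → Finset (List Bool), ∀ p q : P, p ≤ q ↔ TVle (f p) (f q) := by
  obtain ⟨e, he⟩ := Countable.exists_injective_nat P
  exact ⟨upsetCodeSet he, fun p q =>
    ⟨tvLe_upsetCodeSet he, le_of_tvLe_upsetCodeSet he⟩⟩
end

section
/- For every finite family F of finite connected simple graphs there exists a simple graph U on a countable type such that: (a) no member of F admits a graph homomorphism into U, and (b) every simple graph G on a countable type such that no member of F admits a graph homomorphism into G has a graph embedding (induced, i.e., preserving adjacency and non-adjacency) into U. In other words, the class Forb_h(F) of countable graphs omitting all homomorphic images of members of F contains an embedding-universal graph. -/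
/-!
Call an `F`-free graph `H` existentially closed if every finite extension of a finite tuple `c`
of vertices whose free amalgam with `H` over `c` is still `F`-free is already realized in `H`
over `c`. Countably many free amalgamations, all kept `F`-free, turn a countable `F`-free graph
`G` into a countable existentially closed one containing `G` as an induced subgraph; a
homomorphism from a finite graph into the union of the chain factors through a stage.

Any countable existentially closed `F`-free graph embeds into any other one, by a forth
construction. The invariant is that corresponding tuples induce the same graph and realize the
same pieces: a piece is what a homomorphism from a member of `F` into a free amalgam over a
tuple leaves in the old graph. Whether a free amalgam over a tuple stays `F`-free depends only
on the graph induced on the tuple and on the pieces realized over it. There are finitely many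
pieces, so a finite extension witnessing all pieces over the enlarged tuple exists, and it can
be copied into the other graph. Connectedness of the members of `F` starts the induction: a
homomorphism from a connected graph into a disjoint union lands in one side, so over the empty
tuple consistency is the same in any two `F`-free graphs.

The universal graph is the closure of the empty graph. If some member of `F` has no edge, it
is a single vertex, and only graphs on empty vertex types are `F`-free.
-/

universe u

open Function SimpleGraph

theorem SimpleGraph.Connected.nonempty_hom_of_hom_sum {W α β : Type*} {A : SimpleGraph W}
    (hA : A.Connected) {G : SimpleGraph α} {K : SimpleGraph β} (g : A →g G ⊕g K) {u₀ : W}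
    {a : α} (h₀ : g u₀ = .inl a) : Nonempty (A →g G) := by
  have hleft (u : W) : ∃ a', g u = .inl a' := by
    rcases h : g u with a' | b
    · exact ⟨a', rfl⟩
    · have := (hA.preconnected u₀ u).map g
      rw [h₀, h] at this
      exact absurd this (not_reachable_sum_inl_inr a b)
  choose f hf using hleft
  refine ⟨⟨f, fun huv => ?_⟩⟩
  have := g.map_adj huv
  rwa [hf, hf, sum_adj_inl] at this

namespace ForbHom

variable {ι : Type*} {V : ι → Type*} (F : ∀ i, SimpleGraph (V i))
variable {α β κ : Type*} {ℓ : ℕ}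

def HomFree (G : SimpleGraph α) : Prop := ∀ i, IsEmpty (F i →g G)

variable {F}

theorem HomFree.of_hom {G : SimpleGraph α} {G' : SimpleGraph β} (φ : G →g G')
    (h : HomFree F G') : HomFree F G :=
  fun i => ⟨fun g => (h i).false (φ.comp g)⟩

theorem homFree_bot (hF : ∀ i, ∃ u v, (F i).Adj u v) : HomFree F (⊥ : SimpleGraph α) :=
  fun i => ⟨fun g => by obtain ⟨u, v, huv⟩ := hF i; exact g.map_adj huv⟩

theorem homFree_of_isEmpty [IsEmpty α] (hconn : ∀ i, (F i).Connected) (G : SimpleGraph α) :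
    HomFree F G :=
  fun i => ⟨fun g => (hconn i).nonempty.elim fun u => isEmptyElim (g u)⟩

theorem isEmpty_of_homFree {i : ι} (hi : ∀ u v, ¬(F i).Adj u v) {G : SimpleGraph α}
    (hG : HomFree F G) : IsEmpty α :=
  ⟨fun a => (hG i).false ⟨fun _ => a, fun huv => absurd huv (hi _ _)⟩⟩

theorem homFree_sum (hconn : ∀ i, (F i).Connected) {G : SimpleGraph α} {K : SimpleGraph β}
    (hG : HomFree F G) (hK : HomFree F K) : HomFree F (G ⊕g K) := by
  intro i
  refine ⟨fun g => ?_⟩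
  obtain ⟨u₀⟩ := (hconn i).nonempty
  rcases h₀ : g u₀ with a | b
  · exact (hG i).false ((hconn i).nonempty_hom_of_hom_sum g h₀).some
  · exact (hK i).false ((hconn i).nonempty_hom_of_hom_sum (Iso.sumComm.toHom.comp g)
      (u₀ := u₀) (a := b) (by simp [h₀])).some

theorem HomFree.iSup [∀ i, Finite (V i)] {G : ℕ → SimpleGraph α} (hmono : Monotone G)
    (h : ∀ n, HomFree F (G n)) : HomFree F (⨆ n, G n) := by
  intro i
  refine ⟨fun g => ?_⟩
  have hstage (uv : V i × V i) : ∃ n, (F i).Adj uv.1 uv.2 → (G n).Adj (g uv.1) (g uv.2) := by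
    by_cases huv : (F i).Adj uv.1 uv.2
    · obtain ⟨n, hn⟩ := iSup_adj.1 (g.map_adj huv)
      exact ⟨n, fun _ => hn⟩
    · exact ⟨0, fun h => absurd h huv⟩
  choose n hn using hstage
  obtain ⟨N, hN⟩ := Finite.bddAbove_range n
  exact (h N i).false ⟨g, fun {u v} huv => hmono (hN ⟨(u, v), rfl⟩) (hn (u, v) huv)⟩

/-- Glues `P` onto `H` by identifying `.inl j` with `c j`; the edges of `P` between two boundary
vertices are ignored. -/
def freeAmalgam (H : SimpleGraph α) (c : Fin ℓ → α) (P : SimpleGraph (Fin ℓ ⊕ κ)) :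
    SimpleGraph (α ⊕ κ) where
  Adj
    | .inl v, .inl w => H.Adj v w
    | .inl v, .inr z | .inr z, .inl v => ∃ j, c j = v ∧ P.Adj (.inl j) (.inr z)
    | .inr z, .inr z' => P.Adj (.inr z) (.inr z')
  symm := by
    constructor
    rintro (v | z) (w | z') h
    exacts [h.symm, h, h, h.symm]
  loopless := by
    constructor
    rintro (v | z) h
    exacts [H.loopless.irrefl v h, P.loopless.irrefl _ h]

section FreeAmalgam

variable {H : SimpleGraph α} {c : Fin ℓ → α} {P : SimpleGraph (Fin ℓ ⊕ κ)}

@[simp] theorem freeAmalgam_adj_inl_inl {v w : α} :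
    (freeAmalgam H c P).Adj (.inl v) (.inl w) ↔ H.Adj v w := Iff.rfl

@[simp] theorem freeAmalgam_adj_inl_inr {v : α} {z : κ} :
    (freeAmalgam H c P).Adj (.inl v) (.inr z) ↔ ∃ j, c j = v ∧ P.Adj (.inl j) (.inr z) :=
  Iff.rfl

@[simp] theorem freeAmalgam_adj_inr_inl {v : α} {z : κ} :
    (freeAmalgam H c P).Adj (.inr z) (.inl v) ↔ ∃ j, c j = v ∧ P.Adj (.inl j) (.inr z) :=
  Iff.rfl

@[simp] theorem freeAmalgam_adj_inr_inr {z z' : κ} :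
    (freeAmalgam H c P).Adj (.inr z) (.inr z') ↔ P.Adj (.inr z) (.inr z') := Iff.rfl

theorem freeAmalgam_comap_sumMap (hc : Injective c) (hP : P.comap Sum.inl = H.comap c) :
    (freeAmalgam H c P).comap (Sum.map c id) = P := by
  ext (j | z) (j' | z')
  · simp [← comap_adj (f := Sum.inl) (G := P), hP]
  · simp [hc.eq_iff]
  · simp [hc.eq_iff, P.adj_comm]
  · simp

theorem freeAmalgam_nil (H : SimpleGraph α) (P : SimpleGraph (Fin 0 ⊕ κ)) :
    freeAmalgam H Fin.elim0 P = H ⊕g P.comap Sum.inr := by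
  ext (v | z) (w | z') <;> simp [freeAmalgam]

end FreeAmalgam

variable (F) in
def Consistent (H : SimpleGraph α) (c : Fin ℓ → α) (P : SimpleGraph (Fin ℓ ⊕ κ)) : Prop :=
  HomFree F (freeAmalgam H c P)

theorem Consistent.mono {H H' : SimpleGraph α} (hle : H ≤ H') {c : Fin ℓ → α}
    {P : SimpleGraph (Fin ℓ ⊕ κ)} (h : Consistent F H' c P) : Consistent F H c P :=
  HomFree.of_hom (G' := freeAmalgam H' c P) ⟨id, fun {x y} hxy => by
    rcases x with v | z <;> rcases y with w | z'
    exacts [hle hxy, hxy, hxy, hxy]⟩ h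

theorem Consistent.comap {κ' : Type*} {H : SimpleGraph α} {c : Fin ℓ → α}
    {P : SimpleGraph (Fin ℓ ⊕ κ)} (f : κ' → κ) (h : Consistent F H c P) :
    Consistent F H c (P.comap (Sum.map id f)) :=
  HomFree.of_hom (G' := freeAmalgam H c P) ⟨Sum.map id f, fun {x y} hxy => by
    rcases x with v | z <;> rcases y with w | z'
    exacts [hxy, hxy, hxy, hxy]⟩ h

/-- The amalgam folds back onto `H` by sending the new copy of `ξ` to `ξ`. -/
theorem consistent_comap_sumElim {H : SimpleGraph α} (hH : HomFree F H) (c : Fin ℓ → α)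
    (ξ : κ → α) : Consistent F H c (H.comap (Sum.elim c ξ)) :=
  HomFree.of_hom (G' := H) ⟨Sum.elim id ξ, fun {x y} hxy => by
    rcases x with v | z <;> rcases y with w | z'
    · exact hxy
    · obtain ⟨j, rfl, h⟩ := hxy; exact h
    · obtain ⟨j, rfl, h⟩ := hxy; exact h.symm
    · exact hxy⟩ hH

theorem Consistent.nil (hconn : ∀ i, (F i).Connected) {H : SimpleGraph α}
    {H' : SimpleGraph β} {P : SimpleGraph (Fin 0 ⊕ κ)} (hP : Consistent F H Fin.elim0 P)
    (hH' : HomFree F H') : Consistent F H' Fin.elim0 P := by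
  rw [Consistent, freeAmalgam_nil] at *
  exact homFree_sum hconn hH' (hP.of_hom Embedding.sumInr.toHom)

variable (F) in
def IsExistentiallyClosed (H : SimpleGraph α) : Prop :=
  ∀ (ℓ b : ℕ) (c : Fin ℓ → α) (P : SimpleGraph (Fin ℓ ⊕ Fin b)), Injective c →
    P.comap Sum.inl = H.comap c → Consistent F H c P →
    ∃ d : Fin b → α, Injective (Sum.elim c d) ∧ H.comap (Sum.elim c d) = P

theorem IsExistentiallyClosed.exists_comap_eq {H : SimpleGraph α} {H' : SimpleGraph β}
    (hec : IsExistentiallyClosed F H') [Finite κ] {c : Fin ℓ → α} {c' : Fin ℓ → β}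
    (hc' : Injective c') (hbd : H.comap c = H'.comap c') {ξ : κ → α}
    (hP : Consistent F H' c' (H.comap (Sum.elim c ξ))) :
    ∃ d : κ → β, Injective (Sum.elim c' d) ∧
      H.comap (Sum.elim c ξ) = H'.comap (Sum.elim c' d) := by
  set e := Finite.equivFin κ
  obtain ⟨d, hd, hdP⟩ := hec ℓ _ c' _ hc' (by rw [comap_comap, comap_comap]; exact hbd)
    (hP.comap e.symm)
  have hde : Sum.elim c' (d ∘ e) = Sum.elim c' d ∘ Sum.map id e := by ext (j | z) <;> rfl
  refine ⟨d ∘ e, ?_, ?_⟩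
  · rw [hde]
    exact hd.comp (Sum.map_injective.2 ⟨injective_id, e.injective⟩)
  · rw [hde, ← comap_comap, hdP, comap_comap, Sum.map_comp_map]
    simp

/-- The place of a vertex of a member of `F`, relative to a boundary tuple of length `ℓ`, under
a map into a free amalgam: in the new part, in the old part off the boundary, or on the `j`-th
boundary vertex. -/
inductive Role (ℓ : ℕ)
  | absent
  | interior
  | boundary (j : Fin ℓ)

instance : Finite (Role ℓ) :=
  Finite.of_surjective
    (fun o : Option (Option (Fin ℓ)) => o.elim .absent (·.elim .interior .boundary))
    (by rintro (_ | _ | j); exacts [⟨none, rfl⟩, ⟨some none, rfl⟩, ⟨some (some j), rfl⟩])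

abbrev Piece (V : ι → Type*) (ℓ : ℕ) := Σ i, V i → Role ℓ

variable (F) in
structure IsRealization (H : SimpleGraph α) (c : Fin ℓ → α) (p : Piece V ℓ) (h : V p.1 → α) :
    Prop where
  boundary : ∀ u j, p.2 u = .boundary j → h u = c j
  interior_notMem : ∀ u, p.2 u = .interior → h u ∉ Set.range c
  adj : ∀ u v, (F p.1).Adj u v → p.2 u = .interior → p.2 v ≠ .absent → H.Adj (h u) (h v)

variable (F) in
def Realizes (H : SimpleGraph α) (c : Fin ℓ → α) (p : Piece V ℓ) : Prop :=
  ∃ h, IsRealization F H c p h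

theorem Realizes.of_comap_eq {ι' : Type*} {H : SimpleGraph α} {H' : SimpleGraph β}
    {Φ : ι' → α} {Φ' : ι' → β} (hΦ' : Injective Φ') (hΦ : H.comap Φ = H'.comap Φ')
    {t : Fin ℓ → ι'} {p : Piece V ℓ} {τ : V p.1 → ι'}
    (hτ : IsRealization F H (Φ ∘ t) p (Φ ∘ τ)) : Realizes F H' (Φ' ∘ t) p := by
  have hadj (a b : ι') : H.Adj (Φ a) (Φ b) ↔ H'.Adj (Φ' a) (Φ' b) := by
    change (H.comap Φ).Adj a b ↔ (H'.comap Φ').Adj a b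
    rw [hΦ]
  -- `τ` is corrected on the boundary, where `Φ` may identify indices that `Φ'` separates.
  let σ : V p.1 → ι' := fun u => match p.2 u with
    | .boundary j => t j
    | _ => τ u
  have hσ (u : V p.1) : Φ (σ u) = Φ (τ u) := by
    simp only [σ]
    split
    · exact (hτ.boundary u _ ‹_›).symm
    · rfl
  refine ⟨Φ' ∘ σ, fun u j hu => by simp [σ, hu], fun u hu => ?_, fun u v huv hu hv => ?_⟩
  · rintro ⟨j, hj⟩
    exact hτ.interior_notMem u hu ⟨j, by simp only [comp_apply, hΦ'.eq_iff] at hj ⊢; rw [hj, hσ]⟩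
  · simpa only [comp_apply, ← hadj, hσ] using hτ.adj u v huv hu hv

open Classical in
noncomputable def traceRole (c : Fin ℓ → β) : β ⊕ κ → Role ℓ
  | .inr _ => .absent
  | .inl w => if h : w ∈ Set.range c then .boundary h.choose else .interior

section Trace

variable {H : SimpleGraph α} {H' : SimpleGraph β} {c : Fin ℓ → α} {c' : Fin ℓ → β}
  {P : SimpleGraph (Fin ℓ ⊕ κ)} {i : ι}

theorem traceRole_eq_boundary (hc' : Injective c') {x : β ⊕ κ} {j : Fin ℓ} :
    traceRole c' x = .boundary j ↔ x = .inl (c' j) := by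
  rcases x with w | z
  · simp only [traceRole, Sum.inl.injEq]
    split_ifs with h
    · simp only [Role.boundary.injEq]
      constructor
      · rintro rfl; exact h.choose_spec.symm
      · rintro rfl; exact hc' h.choose_spec
    · simp only [false_iff]
      rintro rfl; exact h ⟨j, rfl⟩
  · simp [traceRole]

theorem traceRole_eq_interior {x : β ⊕ κ} :
    traceRole c' x = .interior ↔ ∃ w, x = .inl w ∧ w ∉ Set.range c' := by
  rcases x with w | z
  · simp only [traceRole, Sum.inl.injEq, exists_eq_left']
    split_ifs with h <;> simp [h]
  · simp [traceRole]

theorem traceRole_eq_absent {x : β ⊕ κ} : traceRole c' x = .absent ↔ ∃ z, x = .inr z := by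
  rcases x with w | z
  · simp only [traceRole]
    split_ifs <;> simp
  · simp [traceRole]

theorem isRealization_trace [Nonempty β] (hc' : Injective c') (g : F i →g freeAmalgam H' c' P) :
    IsRealization F H' c' ⟨i, traceRole c' ∘ g⟩
      fun u => (g u).elim id fun _ => Classical.ofNonempty where
  boundary u j hu := by
    change traceRole c' (g u) = .boundary j at hu
    rw [traceRole_eq_boundary hc'] at hu
    simp [hu]
  interior_notMem u hu := by
    obtain ⟨w, hw, hwc⟩ := traceRole_eq_interior.1 hu
    simpa [hw] using hwc
  adj u v huv hu hv := by
    obtain ⟨w, hw, -⟩ := traceRole_eq_interior.1 hu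
    obtain ⟨w', hw'⟩ : ∃ w', g v = .inl w' := by
      rcases hgv : g v with w' | z
      · exact ⟨w', rfl⟩
      · exact absurd (traceRole_eq_absent.2 ⟨z, hgv⟩) hv
    have := g.map_adj huv
    rw [hw, hw'] at this ⊢
    exact this

def traceLift (g : V i → β ⊕ κ) (h : V i → α) (u : V i) : α ⊕ κ :=
  (g u).elim (fun _ => .inl (h u)) .inr

theorem traceLift_of_ne_absent {g : V i → β ⊕ κ} {h : V i → α} {u : V i}
    (hu : traceRole c' (g u) ≠ .absent) : traceLift g h u = .inl (h u) := by
  rcases hgu : g u with w | z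
  · simp [traceLift, hgu]
  · exact absurd (traceRole_eq_absent.2 ⟨z, hgu⟩) hu

theorem adj_traceLift (hc' : Injective c') (hbd : H'.comap c' ≤ H.comap c)
    (g : F i →g freeAmalgam H' c' P) {h : V i → α}
    (hh : IsRealization F H c ⟨i, traceRole c' ∘ g⟩ h) {u v : V i} (huv : (F i).Adj u v)
    (hu : traceRole c' (g u) ≠ .absent) :
    (freeAmalgam H c P).Adj (traceLift g h u) (traceLift g h v) := by
  have hg := g.map_adj huv
  rw [traceLift_of_ne_absent hu]
  rcases hru : traceRole c' (g u) with _ | _ | j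
  · exact absurd hru hu
  · have hv : traceRole c' (g v) ≠ .absent := by
      rintro hrv
      obtain ⟨w, hw, hwc⟩ := traceRole_eq_interior.1 hru
      obtain ⟨z, hz⟩ := traceRole_eq_absent.1 hrv
      rw [hw, hz] at hg
      obtain ⟨j, rfl, -⟩ := hg
      exact hwc ⟨j, rfl⟩
    rw [traceLift_of_ne_absent hv]
    exact hh.adj u v huv hru hv
  rw [hh.boundary u j hru]
  have hgu := (traceRole_eq_boundary hc').1 hru
  rcases hrv : traceRole c' (g v) with _ | _ | j'
  · obtain ⟨z, hz⟩ := traceRole_eq_absent.1 hrv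
    rw [hgu, hz] at hg
    obtain ⟨j', hj', hP⟩ := hg
    simp only [traceLift, hz, Sum.elim_inr, freeAmalgam_adj_inl_inr]
    exact ⟨j', by rw [hc' hj'], hP⟩
  · rw [traceLift_of_ne_absent (c' := c') (by simp [hrv]), ← hh.boundary u j hru]
    exact (hh.adj v u huv.symm hrv (by simp [hru])).symm
  · rw [traceLift_of_ne_absent (c' := c') (by simp [hrv]), hh.boundary v j' hrv]
    rw [hgu, (traceRole_eq_boundary hc').1 hrv] at hg
    exact hbd hg

theorem nonempty_hom_of_isRealization_trace (hc' : Injective c')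
    (hbd : H'.comap c' ≤ H.comap c) (g : F i →g freeAmalgam H' c' P) {h : V i → α}
    (hh : IsRealization F H c ⟨i, traceRole c' ∘ g⟩ h) : Nonempty (F i →g freeAmalgam H c P) := by
  refine ⟨⟨traceLift g h, fun {u v} huv => ?_⟩⟩
  by_cases hu : traceRole c' (g u) = .absent
  · by_cases hv : traceRole c' (g v) = .absent
    · obtain ⟨z, hz⟩ := traceRole_eq_absent.1 hu
      obtain ⟨z', hz'⟩ := traceRole_eq_absent.1 hv
      have hg := g.map_adj huv
      rw [hz, hz'] at hg
      simpa [traceLift, hz, hz'] using hg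
    · exact (adj_traceLift hc' hbd g hh huv.symm hv).symm
  · exact adj_traceLift hc' hbd g hh huv hu

theorem Consistent.of_realizes [Nonempty β] (hc' : Injective c') (hbd : H'.comap c' ≤ H.comap c)
    (hreal : ∀ p, Realizes F H' c' p → Realizes F H c p) (hP : Consistent F H c P) :
    Consistent F H' c' P := fun i =>
  ⟨fun g => by
    obtain ⟨h, hh⟩ := hreal _ ⟨_, isRealization_trace hc' g⟩
    exact (hP i).false (nonempty_hom_of_isRealization_trace hc' hbd g hh).some⟩

theorem Realizes.of_consistent [∀ i, Finite (V i)] (hH : HomFree F H)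
    (hec : IsExistentiallyClosed F H') (hc' : Injective c') (hbd : H.comap c = H'.comap c')
    {p : Piece V ℓ}
    (hcons : ∀ P : SimpleGraph (Fin ℓ ⊕ V p.1), Consistent F H c P → Consistent F H' c' P)
    (hp : Realizes F H c p) : Realizes F H' c' p := by
  obtain ⟨k, hk⟩ := hp
  obtain ⟨d, hd, hcomap⟩ :=
    hec.exists_comap_eq hc' hbd (hcons _ (consistent_comap_sumElim hH c k))
  exact Realizes.of_comap_eq hd hcomap (t := Sum.inl) (τ := Sum.inr) hk

end Trace

variable (F) in
structure SameType (H : SimpleGraph α) (H' : SimpleGraph β) (c : Fin ℓ → α) (c' : Fin ℓ → β) :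
    Prop where
  injective_left : Injective c
  injective_right : Injective c'
  comap_eq : H.comap c = H'.comap c'
  realizes_iff : ∀ p : Piece V ℓ, Realizes F H c p ↔ Realizes F H' c' p

theorem restrict_succ_eq_snoc {γ : Type*} (s : ℕ → γ) (n : ℕ) :
    (fun j : Fin (n + 1) => s j) = Fin.snoc (fun j : Fin n => s j) (s n) := by
  funext j
  induction j using Fin.lastCases <;> simp

section BackAndForth

variable [∀ i, Finite (V i)] {H : SimpleGraph α} {H' : SimpleGraph β}

theorem SameType.nil (hconn : ∀ i, (F i).Connected) (hH : HomFree F H) (hH' : HomFree F H')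
    (hec : IsExistentiallyClosed F H) (hec' : IsExistentiallyClosed F H') :
    SameType F H H' (Fin.elim0 : Fin 0 → α) Fin.elim0 := by
  have hbd : H.comap Fin.elim0 = H'.comap Fin.elim0 := by ext a; exact a.elim0
  refine ⟨injective_of_subsingleton _, injective_of_subsingleton _, hbd, fun p => ⟨?_, ?_⟩⟩
  · exact Realizes.of_consistent hH hec' (injective_of_subsingleton _) hbd
      fun _ hP => hP.nil hconn hH'
  · exact Realizes.of_consistent hH' hec (injective_of_subsingleton _) hbd.symm
      fun _ hP => hP.nil hconn hH

theorem SameType.exists_snoc [Finite ι] [Nonempty α] [Nonempty β] (hH : HomFree F H)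
    (hH' : HomFree F H') (hec : IsExistentiallyClosed F H) (hec' : IsExistentiallyClosed F H')
    {c : Fin ℓ → α} {c' : Fin ℓ → β} (hs : SameType F H H' c c') {x : α}
    (hx : x ∉ Set.range c) : ∃ x', SameType F H H' (Fin.snoc c x) (Fin.snoc c' x') := by
  classical
  -- `x` together with a witness of every piece realized over `snoc c x`
  let wit (p : Piece V (ℓ + 1)) : V p.1 → α :=
    if hp : Realizes F H (Fin.snoc c x) p then hp.choose else fun _ => x
  let ξ : Option (Σ p : Piece V (ℓ + 1), V p.1) → α := fun o => o.elim x fun q => wit q.1 q.2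
  obtain ⟨d, hd, hcomap⟩ := hec'.exists_comap_eq hs.injective_right hs.comap_eq
    ((consistent_comap_sumElim hH c ξ).of_realizes hs.injective_right hs.comap_eq.ge
      fun p => (hs.realizes_iff p).2)
  let t : Fin (ℓ + 1) → Fin ℓ ⊕ Option (Σ p : Piece V (ℓ + 1), V p.1) :=
    Fin.snoc .inl (.inr none)
  have ht : Sum.elim c ξ ∘ t = Fin.snoc c x := Fin.comp_snoc ..
  have ht' : Sum.elim c' d ∘ t = Fin.snoc c' (d none) := Fin.comp_snoc ..
  have hinj : Injective (Fin.snoc c x) := Fin.snoc_injective_iff.2 ⟨hs.injective_left, hx⟩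
  have hinj' : Injective (Fin.snoc c' (d none)) :=
    ht' ▸ hd.comp (Fin.snoc_injective_iff.2 ⟨Sum.inl_injective, by simp⟩)
  have hbd : H.comap (Fin.snoc c x) = H'.comap (Fin.snoc c' (d none)) := by
    rw [← ht, ← ht', ← comap_comap, hcomap, comap_comap]
  have fwd (p) (hp : Realizes F H (Fin.snoc c x) p) : Realizes F H' (Fin.snoc c' (d none)) p := by
    rw [← ht']
    refine Realizes.of_comap_eq hd hcomap (τ := fun u => .inr (some ⟨p, u⟩)) ?_
    rw [ht]
    convert hp.choose_spec using 1
    funext u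
    simp [ξ, wit, hp]
  exact ⟨d none, hinj, hinj', hbd, fun p => ⟨fwd p,
    Realizes.of_consistent hH' hec hinj hbd.symm fun _ hP => hP.of_realizes hinj hbd.le fwd⟩⟩

variable (F H H') in
noncomputable def embedSeq [Nonempty β] (e : ℕ → α) : ℕ → β
  | n => Classical.epsilon fun y => SameType F H H' (fun j : Fin (n + 1) => e j)
      (Fin.snoc (fun j : Fin n => embedSeq e j) y)

theorem sameType_embedSeq [Finite ι] [Nonempty α] [Nonempty β] (hconn : ∀ i, (F i).Connected)
    (hH : HomFree F H) (hH' : HomFree F H') (hec : IsExistentiallyClosed F H)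
    (hec' : IsExistentiallyClosed F H') {e : ℕ → α} (he : Injective e) :
    ∀ n, SameType F H H' (fun j : Fin n => e j) (fun j : Fin n => embedSeq F H H' e j)
  | 0 => by convert SameType.nil hconn hH hH' hec hec'
  | n + 1 => by
    rw [restrict_succ_eq_snoc (embedSeq F H H' e), embedSeq]
    refine Classical.epsilon_spec (p := fun y => SameType F H H' _ (Fin.snoc _ y)) ?_
    rw [restrict_succ_eq_snoc e]
    refine (sameType_embedSeq hconn hH hH' hec hec' he n).exists_snoc hH hH' hec hec' ?_
    rintro ⟨j, hj⟩
    exact j.isLt.ne (he hj)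

theorem nonempty_embedding_of_isExistentiallyClosed [Finite ι] [Countable α] [Infinite α]
    [Nonempty β] (hconn : ∀ i, (F i).Connected) (hH : HomFree F H) (hH' : HomFree F H')
    (hec : IsExistentiallyClosed F H) (hec' : IsExistentiallyClosed F H') :
    Nonempty (H ↪g H') := by
  obtain ⟨e⟩ : Nonempty (ℕ ≃ α) := by
    obtain ⟨_⟩ := nonempty_denumerable α
    exact ⟨(Denumerable.eqv α).symm⟩
  have hs (a b : ℕ) := sameType_embedSeq hconn hH hH' hec hec' e.injective (max a b + 1)
  have hinj : Injective (embedSeq F H H' e) := fun a b hab => by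
    simpa using (hs a b).injective_right (a₁ := ⟨a, by omega⟩) (a₂ := ⟨b, by omega⟩) hab
  have hadj (a b : ℕ) :
      H'.Adj (embedSeq F H H' e a) (embedSeq F H H' e b) ↔ H.Adj (e a) (e b) :=
    (congrArg (fun K => K.Adj ⟨a, by omega⟩ ⟨b, by omega⟩) (hs a b).comap_eq).to_iff.symm
  exact ⟨⟨⟨embedSeq F H H' e ∘ e.symm, hinj.comp e.symm.injective⟩, by simp [hadj]⟩⟩

end BackAndForth

section Closure

variable {α : Type*}

def level : α ⊕ ℕ → ℕ
  | .inl _ => 0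
  | .inr n => n + 1

structure Task (α : Type*) where
  ℓ : ℕ
  b : ℕ
  boundary : Fin ℓ → α ⊕ ℕ
  pattern : SimpleGraph (Fin ℓ ⊕ Fin b)

instance [Countable α] : Countable (Task α) :=
  Surjective.countable
    (f := fun t : Σ ℓ b : ℕ, (Fin ℓ → α ⊕ ℕ) × SimpleGraph (Fin ℓ ⊕ Fin b) =>
      (⟨t.1, t.2.1, t.2.2.1, t.2.2.2⟩ : Task α))
    fun t => ⟨⟨t.ℓ, t.b, t.boundary, t.pattern⟩, rfl⟩

instance : Nonempty (Task α) := ⟨⟨0, 0, Fin.elim0, ⊥⟩⟩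

noncomputable def taskEnum [Countable α] : ℕ → Task α := (exists_surjective_nat (Task α)).choose

theorem taskEnum_surjective [Countable α] : Surjective (taskEnum : ℕ → Task α) :=
  (exists_surjective_nat (Task α)).choose_spec

structure Stage (α : Type*) where
  bound : ℕ
  graph : SimpleGraph (α ⊕ ℕ)

def Stage.Bounded (S : Stage α) : Prop := ∀ x y, S.graph.Adj x y → level x ≤ S.bound

def Stage.base (S : Stage α) (τ : Task α) : ℕ :=
  max S.bound (Finset.univ.sup fun j => level (τ.boundary j))

def Stage.newVertex (S : Stage α) (τ : Task α) (z : Fin τ.b) : α ⊕ ℕ := .inr (S.base τ + z)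

def toAmalgam (base b : ℕ) : α ⊕ ℕ → (α ⊕ ℕ) ⊕ Fin b
  | .inr n => if h : base ≤ n ∧ n < base + b then .inr ⟨n - base, by omega⟩ else .inl (.inr n)
  | x => .inl x

variable (F) in
open Classical in
noncomputable def Stage.extend (S : Stage α) (τ : Task α) : Stage α :=
  if Injective τ.boundary ∧ Consistent F S.graph τ.boundary τ.pattern then
    ⟨S.base τ + τ.b, (freeAmalgam S.graph τ.boundary τ.pattern).comap (toAmalgam (S.base τ) τ.b)⟩
  else S

theorem toAmalgam_of_level_le {base b : ℕ} {x : α ⊕ ℕ} (hx : level x ≤ base) :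
    toAmalgam base b x = .inl x := by
  rcases x with a | n
  · rfl
  · simp only [level] at hx
    simp only [toAmalgam, dif_neg (by omega : ¬(base ≤ n ∧ n < base + b))]

theorem toAmalgam_eq_inl {base b : ℕ} {x y : α ⊕ ℕ} (h : toAmalgam base b x = .inl y) :
    y = x := by
  rcases x with a | n
  · simpa [toAmalgam] using h.symm
  · simp only [toAmalgam] at h
    split_ifs at h
    simpa using h.symm

theorem toAmalgam_eq_inr {base b : ℕ} {x : α ⊕ ℕ} {z : Fin b} (h : toAmalgam base b x = .inr z) :
    x = .inr (base + z) := by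
  rcases x with a | n
  · simp [toAmalgam] at h
  · simp only [toAmalgam] at h
    split_ifs at h with hn
    simp only [Sum.inr.injEq, Fin.ext_iff] at h ⊢
    omega

section Extend

variable (S : Stage α) (τ : Task α)

theorem Stage.bound_le_base : S.bound ≤ S.base τ := le_max_left ..

theorem Stage.level_boundary_le_base (j : Fin τ.ℓ) : level (τ.boundary j) ≤ S.base τ :=
  le_max_of_le_right (Finset.le_sup (f := fun j => level (τ.boundary j)) (Finset.mem_univ j))

theorem Stage.level_sumElim_newVertex_le (a : Fin τ.ℓ ⊕ Fin τ.b) :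
    level (Sum.elim τ.boundary (S.newVertex τ) a) ≤ S.base τ + τ.b := by
  rcases a with j | z
  · exact S.level_boundary_le_base τ j |>.trans (Nat.le_add_right ..)
  · simp only [Sum.elim_inr, newVertex, level]
    omega

theorem Stage.injective_sumElim_newVertex {τ : Task α} (hc : Injective τ.boundary) :
    Injective (Sum.elim τ.boundary (S.newVertex τ)) := by
  refine hc.sumElim (fun z z' h => Fin.ext (by simpa [newVertex] using h)) fun j z h => ?_
  have := S.level_boundary_le_base τ j
  rw [h, newVertex, level] at this
  omega

theorem Stage.toAmalgam_comp_sumElim_newVertex :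
    toAmalgam (S.base τ) τ.b ∘ Sum.elim τ.boundary (S.newVertex τ) = Sum.map τ.boundary id := by
  ext (j | z) : 1
  · exact toAmalgam_of_level_le (S.level_boundary_le_base τ j)
  · simp [newVertex, toAmalgam]

variable {S τ}

theorem Stage.extend_of_consistent
    (h : Injective τ.boundary ∧ Consistent F S.graph τ.boundary τ.pattern) :
    S.extend F τ = ⟨S.base τ + τ.b,
      (freeAmalgam S.graph τ.boundary τ.pattern).comap (toAmalgam (S.base τ) τ.b)⟩ :=
  if_pos h

theorem Stage.bound_le_extend : S.bound ≤ (S.extend F τ).bound := by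
  unfold Stage.extend
  split_ifs
  · exact (S.bound_le_base τ).trans (Nat.le_add_right ..)
  · exact le_rfl

theorem Stage.extend_adj_iff {x y : α ⊕ ℕ} (hx : level x ≤ S.bound) (hy : level y ≤ S.bound) :
    (S.extend F τ).graph.Adj x y ↔ S.graph.Adj x y := by
  unfold Stage.extend
  split_ifs
  · simp only [comap_adj, toAmalgam_of_level_le (hx.trans (S.bound_le_base τ)),
      toAmalgam_of_level_le (hy.trans (S.bound_le_base τ)), freeAmalgam_adj_inl_inl]
  · rfl

theorem Stage.Bounded.extend (hS : S.Bounded) : (S.extend F τ).Bounded := by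
  unfold Stage.extend
  split_ifs
  · intro x y hxy
    change (freeAmalgam S.graph τ.boundary τ.pattern).Adj (toAmalgam _ _ x) (toAmalgam _ _ y)
      at hxy
    change level x ≤ S.base τ + τ.b
    rcases hx : toAmalgam (S.base τ) τ.b x with x' | z
    · obtain rfl := toAmalgam_eq_inl hx
      rcases hy : toAmalgam (S.base τ) τ.b y with y' | z'
      · obtain rfl := toAmalgam_eq_inl hy
        rw [hx, hy] at hxy
        exact (hS _ _ hxy).trans ((S.bound_le_base τ).trans (Nat.le_add_right ..))
      · rw [hx, hy] at hxy
        obtain ⟨j, rfl, -⟩ := hxy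
        exact S.level_boundary_le_base τ j |>.trans (Nat.le_add_right ..)
    · rw [toAmalgam_eq_inr hx, level]
      omega
  · exact hS

theorem Stage.homFree_extend (hS : HomFree F S.graph) : HomFree F (S.extend F τ).graph := by
  unfold Stage.extend
  split_ifs with h
  · exact h.2.of_hom (Hom.comap _ _)
  · exact hS

end Extend

variable (F) in
noncomputable def stage [Countable α] (S₀ : Stage α) : ℕ → Stage α
  | 0 => S₀
  | n + 1 => (stage S₀ n).extend F (taskEnum n)

section Stages

variable [Countable α] {S₀ : Stage α}

theorem stage_bounded (h₀ : S₀.Bounded) : ∀ n, (stage F S₀ n).Bounded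
  | 0 => h₀
  | n + 1 => (stage_bounded h₀ n).extend

theorem stage_bound_mono : Monotone fun n => (stage F S₀ n).bound :=
  monotone_nat_of_le_succ fun _ => Stage.bound_le_extend

theorem stage_adj_iff {m n : ℕ} (hmn : m ≤ n) {x y : α ⊕ ℕ}
    (hx : level x ≤ (stage F S₀ m).bound) (hy : level y ≤ (stage F S₀ m).bound) :
    (stage F S₀ n).graph.Adj x y ↔ (stage F S₀ m).graph.Adj x y := by
  induction n, hmn using Nat.le_induction with
  | base => rfl
  | succ n hmn ih =>
    rw [← ih]
    exact Stage.extend_adj_iff (hx.trans (stage_bound_mono hmn)) (hy.trans (stage_bound_mono hmn))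

theorem stage_mono (h₀ : S₀.Bounded) : Monotone fun n => (stage F S₀ n).graph :=
  monotone_nat_of_le_succ fun n x y hxy =>
    (Stage.extend_adj_iff (stage_bounded h₀ n x y hxy) (stage_bounded h₀ n y x hxy.symm)).2 hxy

theorem iSup_stage_comap (h₀ : S₀.Bounded) {γ : Type*} {φ : γ → α ⊕ ℕ} {m : ℕ}
    (hφ : ∀ a, level (φ a) ≤ (stage F S₀ m).bound) :
    (⨆ n, (stage F S₀ n).graph).comap φ = (stage F S₀ m).graph.comap φ := by
  ext a b
  simp only [comap_adj, iSup_adj]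
  refine ⟨fun ⟨n, hn⟩ => ?_, fun h => ⟨m, h⟩⟩
  rcases le_total n m with hnm | hmn
  · exact stage_mono h₀ hnm hn
  · exact (stage_adj_iff hmn (hφ a) (hφ b)).1 hn

theorem homFree_iSup_stage [∀ i, Finite (V i)] (h₀ : S₀.Bounded) (hF₀ : HomFree F S₀.graph) :
    HomFree F (⨆ n, (stage F S₀ n).graph) :=
  HomFree.iSup (stage_mono h₀) fun n => by
    induction n with
    | zero => exact hF₀
    | succ n ih => exact Stage.homFree_extend ih

theorem isExistentiallyClosed_iSup_stage (h₀ : S₀.Bounded) :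
    IsExistentiallyClosed F (⨆ n, (stage F S₀ n).graph) := by
  intro ℓ b c P hc hP hcons
  set U := ⨆ n, (stage F S₀ n).graph
  obtain ⟨n, hn⟩ := taskEnum_surjective (⟨ℓ, b, c, P⟩ : Task α)
  set S := stage F S₀ n
  set τ : Task α := ⟨ℓ, b, c, P⟩
  have hstep : stage F S₀ (n + 1) =
      ⟨S.base τ + b, (freeAmalgam S.graph c P).comap (toAmalgam (S.base τ) b)⟩ := by
    rw [stage, hn]
    exact Stage.extend_of_consistent ⟨hc, hcons.mono (le_iSup (fun n => (stage F S₀ n).graph) n)⟩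
  have hK : U.comap (Sum.elim c (S.newVertex τ)) =
      (freeAmalgam S.graph c P).comap (Sum.map c id) := by
    rw [iSup_stage_comap h₀ (m := n + 1) (by rw [hstep]; exact S.level_sumElim_newVertex_le τ),
      hstep, comap_comap, S.toAmalgam_comp_sumElim_newVertex τ]
  refine ⟨_, S.injective_sumElim_newVertex (τ := τ) hc,
    hK.trans (freeAmalgam_comap_sumMap hc ?_)⟩
  calc P.comap Sum.inl = U.comap c := hP
    _ = (U.comap (Sum.elim c (S.newVertex τ))).comap Sum.inl := by
      rw [comap_comap]; rfl
    _ = S.graph.comap c := by rw [hK, comap_comap]; rfl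

end Stages

variable (F) in
noncomputable def existentialClosure [Countable α] (G : SimpleGraph α) : SimpleGraph (α ⊕ ℕ) :=
  ⨆ n, (stage F ⟨0, G ⊕g (⊥ : SimpleGraph ℕ)⟩ n).graph

theorem bounded_sum_bot (G : SimpleGraph α) :
    (⟨0, G ⊕g (⊥ : SimpleGraph ℕ)⟩ : Stage α).Bounded := by
  rintro (a | n) y h
  · exact le_rfl
  · cases y <;> simp at h

section ExistentialClosure

variable [Countable α] (G : SimpleGraph α)

theorem homFree_existentialClosure [∀ i, Finite (V i)] (hconn : ∀ i, (F i).Connected)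
    (hF : ∀ i, ∃ u v, (F i).Adj u v) {G : SimpleGraph α} (hG : HomFree F G) :
    HomFree F (existentialClosure F G) :=
  homFree_iSup_stage (bounded_sum_bot G) (homFree_sum hconn hG (homFree_bot hF))

theorem isExistentiallyClosed_existentialClosure :
    IsExistentiallyClosed F (existentialClosure F G) :=
  isExistentiallyClosed_iSup_stage (bounded_sum_bot G)

variable (F) in
def embeddingExistentialClosure : G ↪g existentialClosure F G where
  toEmbedding := .inl
  map_rel_iff' {a b} :=
    (congrArg (fun K => K.Adj a b)
      (iSup_stage_comap (bounded_sum_bot G) (m := 0) (φ := Sum.inl) fun _ => le_rfl)).to_iff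

end ExistentialClosure

end Closure

end ForbHom

open ForbHom in
/-- For every finite family `F` of finite connected simple graphs, the class
`Forb_h(F)` of countable graphs admitting no homomorphism from any member of `F`
contains an embedding-universal graph. -/
theorem forbh_graphs_universal {ι : Type} [Finite ι] {m : ι → ℕ}
    (F : ∀ i : ι, SimpleGraph (Fin (m i))) (hconn : ∀ i, (F i).Connected) :
    ∃ (W : Type) (_ : Countable W) (U : SimpleGraph W),
      (∀ i, IsEmpty (F i →g U)) ∧
      ∀ (V : Type u) [Countable V] (G : SimpleGraph V),
        (∀ i, IsEmpty (F i →g G)) → Nonempty (G ↪g U) := by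
  by_cases hF : ∀ i, ∃ u v, (F i).Adj u v
  · have hU := homFree_existentialClosure hconn hF
      (homFree_of_isEmpty hconn (⊥ : SimpleGraph Empty))
    refine ⟨Empty ⊕ ℕ, inferInstance, existentialClosure F ⊥, hU, fun V _ G hG => ?_⟩
    obtain ⟨φ⟩ := nonempty_embedding_of_isExistentiallyClosed hconn
      (homFree_existentialClosure hconn hF hG) hU (isExistentiallyClosed_existentialClosure G)
      (isExistentiallyClosed_existentialClosure ⊥)
    exact ⟨φ.comp (embeddingExistentialClosure F G)⟩
  · push Not at hF
    obtain ⟨i, hi⟩ := hF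
    refine ⟨Empty, inferInstance, ⊥, homFree_of_isEmpty hconn ⊥, fun V _ G hG => ?_⟩
    have := isEmpty_of_homFree hi hG
    exact ⟨⟨⟨isEmptyElim, fun a => isEmptyElim a⟩, fun {a} => isEmptyElim a⟩⟩
end
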